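/- arXiv:1106.5686 — 6 statements merged into one kernel-verified Lean document; each statement's English description precedes it below -/
import Mathlib

section
/- Let α ∈ {0,1}^n be nonzero. Then the colon ideal of the Frobenius power of the face ideal I_α by I_α satisfies (I_α^{[q]} :_S I_α) = I_α^{[q]} + ((x^α)^{q-1}), where (x^α)^{q-1} denotes the principal ideal generated by the (q−1)-st power of the monomial x^α. -/
open MvPowerSeries

/-- The `q`-th Frobenius power `J^{[q]}` of an ideal `J`: the ideal generated by
the `q`-th powers of the elements of `J`. -/
noncomputable def frobeniusPower {R : Type*} [CommRing R] (J : Ideal R) (q : ℕ) : Ideal R :=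
  Ideal.span ((fun f => f ^ q) '' (J : Set R))

/-- The face ideal `I_α` associated to a set of indices `A = supp₊(α)`:
the ideal generated by the variables `x_i`, `i ∈ A`. -/
noncomputable def faceIdeal {n : ℕ} (K : Type*) [Field K] (A : Finset (Fin n)) :
    Ideal (MvPowerSeries (Fin n) K) :=
  Ideal.span ((fun i => (X i : MvPowerSeries (Fin n) K)) '' (A : Set (Fin n)))

section Aux

variable {K : Type*} [Field K] {n : ℕ}

private lemma charP_mvps (p : ℕ) [CharP K p] : CharP (MvPowerSeries (Fin n) K) p :=
  charP_of_injective_ringHom (f := (C : K →+* MvPowerSeries (Fin n) K))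
    (fun a b h => by
      have := congrArg (constantCoeff (σ := Fin n) (R := K)) h
      simpa using this) p

/-- Split a power series in two according to a predicate on exponents. -/
private lemma split_series (P : (Fin n →₀ ℕ) → Prop) [DecidablePred P]
    (f : MvPowerSeries (Fin n) K) :
    ∃ g h : MvPowerSeries (Fin n) K, f = g + h ∧
      (∀ d, coeff (R := K) d g ≠ 0 → P d ∧ coeff (R := K) d g = coeff (R := K) d f) ∧
      (∀ d, coeff (R := K) d h ≠ 0 → ¬ P d ∧ coeff (R := K) d h = coeff (R := K) d f) := by
  refine ⟨(fun d => if P d then coeff (R := K) d f else 0),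
    (fun d => if P d then 0 else coeff (R := K) d f), ?_, ?_, ?_⟩
  · ext d
    show coeff (R := K) d f = coeff (R := K) d _
    show _ = (if P d then coeff (R := K) d f else 0) + (if P d then 0 else coeff (R := K) d f)
    split_ifs <;> simp
  · intro d hd
    have h0 : coeff (R := K) d (fun d => if P d then coeff (R := K) d f else 0 : MvPowerSeries (Fin n) K)
        = if P d then coeff (R := K) d f else 0 := rfl
    rw [h0] at hd ⊢
    by_cases h : P d
    · exact ⟨h, by simp [h]⟩
    · simp [h] at hd
  · intro d hd
    have h0 : coeff (R := K) d (fun d => if P d then 0 else coeff (R := K) d f : MvPowerSeries (Fin n) K)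
        = if P d then 0 else coeff (R := K) d f := rfl
    rw [h0] at hd ⊢
    by_cases h : P d
    · simp [h] at hd
    · exact ⟨h, by simp [h]⟩

private lemma monomial_dvd_of (m : Fin n →₀ ℕ) (f : MvPowerSeries (Fin n) K)
    (h : ∀ d, coeff (R := K) d f ≠ 0 → m ≤ d) : (monomial (R := K) m 1) ∣ f := by
  refine ⟨fun d => coeff (R := K) (d + m) f, ?_⟩
  ext d
  rw [coeff_monomial_mul (φ := (fun d => coeff (R := K) (d + m) f : MvPowerSeries (Fin n) K))]
  split_ifs with hd
  · have h0 : coeff (R := K) (d - m) (fun d => coeff (R := K) (d + m) f : MvPowerSeries (Fin n) K)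
        = coeff (R := K) (d - m + m) f := rfl
    rw [h0, tsub_add_cancel_of_le hd, one_mul]
  · by_contra hne
    exact hd (h d hne)

private lemma prod_monomial {ι : Type*} (s : Finset ι) (m : ι → (Fin n →₀ ℕ)) :
    ∏ i ∈ s, (monomial (R := K) (m i) 1) = monomial (R := K) (∑ i ∈ s, m i) 1 := by
  classical
  induction s using Finset.induction_on with
  | empty => simp [monomial_zero_one]
  | insert _ _ hx ih =>
    rw [Finset.prod_insert hx, Finset.sum_insert hx, ih, monomial_mul_monomial, one_mul]

private lemma mem_span_Xq_iff (A : Finset (Fin n)) (q : ℕ) (f : MvPowerSeries (Fin n) K) :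
    f ∈ Ideal.span ((fun i => (X i : MvPowerSeries (Fin n) K) ^ q) '' A) ↔
      ∀ d, coeff (R := K) d f ≠ 0 → ∃ j ∈ A, q ≤ d j := by
  classical
  constructor
  · intro hf
    induction hf using Submodule.span_induction with
    | mem x hx =>
      obtain ⟨j, hj, rfl⟩ := hx
      intro d hd
      simp only [X_pow_eq, coeff_monomial] at hd
      refine ⟨j, hj, ?_⟩
      split_ifs at hd with h
      · subst h; simp
      · exact absurd rfl hd
    | zero => simp
    | add x y hx hy ihx ihy =>
      intro d hd
      rw [map_add] at hd
      rcases (by by_contra hc; push_neg at hc; rw [hc.1, hc.2, add_zero] at hd; exact hd rfl :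
          coeff (R := K) d x ≠ 0 ∨ coeff (R := K) d y ≠ 0) with h | h
      · exact ihx d h
      · exact ihy d h
    | smul r x hx ihx =>
      intro d hd
      rw [smul_eq_mul, coeff_mul] at hd
      obtain ⟨⟨u, v⟩, huv, hne⟩ := Finset.exists_ne_zero_of_sum_ne_zero hd
      obtain ⟨j, hj, hqj⟩ := ihx v (right_ne_zero_of_mul hne)
      refine ⟨j, hj, le_trans hqj ?_⟩
      rw [Finset.HasAntidiagonal.mem_antidiagonal] at huv
      calc v j ≤ u j + v j := Nat.le_add_left _ _
        _ = d j := by rw [← Finsupp.add_apply, huv]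
  · induction A using Finset.induction_on generalizing f with
    | empty =>
      intro hf
      have : f = 0 := by
        ext d
        by_contra hd
        obtain ⟨j, hj, _⟩ := hf d (by simpa using hd)
        exact absurd hj (Finset.notMem_empty j)
      rw [this]; exact zero_mem _
    | @insert a s ha ih =>
      intro hf
      obtain ⟨g, h, hfgh, hg, hh⟩ := split_series (fun d => q ≤ d a) f
      have hgmem : g ∈ Ideal.span ((fun i => (X i : MvPowerSeries (Fin n) K) ^ q) ''
          (insert a s : Finset (Fin n))) := by
        obtain ⟨t, ht⟩ : (X a : MvPowerSeries (Fin n) K) ^ q ∣ g := by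
          rw [X_pow_dvd_iff]
          intro d hd
          by_contra hne
          exact absurd (hg d hne).1 (not_le.2 hd)
        rw [ht]
        exact Ideal.mul_mem_right _ _ (Ideal.subset_span
          ⟨a, by simp, rfl⟩)
      have hhmem : h ∈ Ideal.span ((fun i => (X i : MvPowerSeries (Fin n) K) ^ q) ''
          (s : Finset (Fin n))) := by
        apply ih
        intro d hd
        obtain ⟨hPa, hco⟩ := hh d hd
        obtain ⟨j, hj, hqj⟩ := hf d (by rw [← hco]; exact hd)
        rcases Finset.mem_insert.1 hj with rfl | hj'
        · exact absurd hqj hPa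
        · exact ⟨j, hj', hqj⟩
      rw [hfgh]
      refine add_mem hgmem (Ideal.span_mono ?_ hhmem)
      exact Set.image_mono (by simp [Finset.subset_insert])

private lemma frob_eq (p : ℕ) [Fact p.Prime] [CharP K p] (e : ℕ) (A : Finset (Fin n)) :
    frobeniusPower (faceIdeal K A) (p ^ e) =
      Ideal.span ((fun i => (X i : MvPowerSeries (Fin n) K) ^ (p ^ e)) '' A) := by
  haveI : CharP (MvPowerSeries (Fin n) K) p := charP_mvps p
  apply le_antisymm
  · rw [frobeniusPower, Ideal.span_le]
    rintro _ ⟨f, hf, rfl⟩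
    show f ^ (p ^ e) ∈ _
    have hf' : f ∈ faceIdeal K A := hf
    clear hf
    induction hf' using Submodule.span_induction with
    | mem x hx =>
      obtain ⟨i, hi, rfl⟩ := hx
      exact Ideal.subset_span ⟨i, hi, rfl⟩
    | zero =>
      rw [zero_pow (pow_pos (Fact.out (p := p.Prime)).pos e).ne']
      exact zero_mem _
    | add x y hx hy ihx ihy =>
      rw [add_pow_char_pow]
      exact add_mem ihx ihy
    | smul r x hx ihx =>
      rw [smul_eq_mul, mul_pow]
      exact Ideal.mul_mem_left _ _ ihx
  · rw [Ideal.span_le]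
    rintro _ ⟨i, hi, rfl⟩
    exact Ideal.subset_span ⟨X i, Ideal.subset_span ⟨i, hi, rfl⟩, rfl⟩

end Aux

theorem colon_frobeniusPower_faceIdeal {K : Type*} [Field K] (p : ℕ) [Fact p.Prime]
    [CharP K p] (e : ℕ) (he : 1 ≤ e) {n : ℕ} (A : Finset (Fin n)) (hA : A.Nonempty) :
    Submodule.colon (frobeniusPower (faceIdeal K A) (p ^ e)) (faceIdeal K A) =
      frobeniusPower (faceIdeal K A) (p ^ e) ⊔
        Ideal.span {(∏ i ∈ A, (X i : MvPowerSeries (Fin n) K)) ^ (p ^ e - 1)} := by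
  classical
  set q := p ^ e with hq
  have hq1 : 1 ≤ q := Nat.one_le_pow _ _ (Fact.out (p := p.Prime)).pos
  rw [frob_eq p e A]
  set J := Ideal.span ((fun i => (X i : MvPowerSeries (Fin n) K) ^ q) '' A) with hJ
  -- the key monomial identity: (∏_{i∈A} X i)^(q-1) = monomial m 1
  set m : Fin n →₀ ℕ := ∑ i ∈ A, Finsupp.single i (q - 1) with hm
  have hprod : (∏ i ∈ A, (X i : MvPowerSeries (Fin n) K)) ^ (q - 1) = monomial (R := K) m 1 := by
    rw [← Finset.prod_pow]
    have : ∀ i ∈ A, (X i : MvPowerSeries (Fin n) K) ^ (q - 1)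
        = monomial (R := K) (Finsupp.single i (q - 1)) 1 := fun i _ => X_pow_eq i (q - 1)
    rw [Finset.prod_congr rfl this, _root_.prod_monomial]
  apply le_antisymm
  · -- hard direction
    intro f hf
    rw [Submodule.mem_colon] at hf
    have hmul : ∀ i ∈ A, f * X i ∈ J := by
      intro i hi
      have := hf (X i) (Ideal.subset_span ⟨i, hi, rfl⟩)
      rwa [smul_eq_mul] at this
    have key : ∀ d : Fin n →₀ ℕ, coeff (R := K) d f ≠ 0 →
        (∃ j ∈ A, q ≤ d j) ∨ ∀ i ∈ A, q - 1 ≤ d i := by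
      intro d hd
      by_cases hcase : ∃ j ∈ A, q ≤ d j
      · exact Or.inl hcase
      · push_neg at hcase
        refine Or.inr fun i hi => ?_
        have hco : coeff (R := K) (d + Finsupp.single i 1) (f * X i) ≠ 0 := by
          have hX : (X i : MvPowerSeries (Fin n) K) = monomial (R := K) (Finsupp.single i 1) 1 := rfl
          rw [hX, coeff_add_mul_monomial, mul_one]
          exact hd
        obtain ⟨j, hj, hqj⟩ := (mem_span_Xq_iff A q _).1 (hmul i hi) _ hco
        rw [Finsupp.add_apply] at hqj
        by_cases hji : j = i
        · subst hji
          rw [Finsupp.single_eq_same] at hqj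
          omega
        · rw [Finsupp.single_eq_of_ne hji, add_zero] at hqj
          exact absurd hqj (not_le.2 (hcase j hj))
    obtain ⟨g, h, hfgh, hg, hh⟩ := split_series (fun d => ∃ j ∈ A, q ≤ d j) f
    have hgmem : g ∈ J := by
      rw [hJ, mem_span_Xq_iff]
      exact fun d hd => (hg d hd).1
    have hhmem : h ∈ Ideal.span {(∏ i ∈ A, (X i : MvPowerSeries (Fin n) K)) ^ (q - 1)} := by
      rw [Ideal.mem_span_singleton, hprod]
      apply monomial_dvd_of
      intro d hd
      obtain ⟨hPd, hco⟩ := hh d hd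
      have hall : ∀ i ∈ A, q - 1 ≤ d i := by
        rcases key d (by rw [← hco]; exact hd) with hcase | hcase
        · exact absurd hcase hPd
        · exact hcase
      rw [hm, Finsupp.le_iff]
      intro j hj
      rw [Finsupp.coe_finset_sum, Finset.sum_apply]
      by_cases hjA : j ∈ A
      · calc (∑ i ∈ A, Finsupp.single i (q - 1) j)
            = q - 1 := by
              rw [Finset.sum_eq_single j (fun i _ hij => Finsupp.single_eq_of_ne hij.symm)
                (fun hc => absurd hjA hc)]
              exact Finsupp.single_eq_same
          _ ≤ d j := hall j hjA
      · have : (∑ i ∈ A, Finsupp.single i (q - 1) j) = 0 := by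
          apply Finset.sum_eq_zero
          intro i hi
          exact Finsupp.single_eq_of_ne (fun hij => hjA (hij ▸ hi))
        rw [this]
        exact Nat.zero_le _
    rw [hfgh]
    exact Submodule.add_mem_sup hgmem hhmem
  · apply sup_le
    · intro x hx
      rw [Submodule.mem_colon]
      intro pp _
      rw [smul_eq_mul]
      exact Ideal.mul_mem_right _ _ hx
    · rw [Ideal.span_le, Set.singleton_subset_iff]
      rw [SetLike.mem_coe, Submodule.mem_colon]
      intro pp hpp
      rw [smul_eq_mul]
      induction hpp using Submodule.span_induction with
      | mem x hx =>
        obtain ⟨j, hj, rfl⟩ := hx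
        show (∏ i ∈ A, (X i : MvPowerSeries (Fin n) K)) ^ (q - 1) * X j ∈ J
        have hXq : (X j : MvPowerSeries (Fin n) K) ^ q ∈ J := by
          rw [hJ]; exact Ideal.subset_span ⟨j, hj, rfl⟩
        have hsplit : (∏ i ∈ A, (X i : MvPowerSeries (Fin n) K))
            = X j * ∏ i ∈ A.erase j, X i := (Finset.mul_prod_erase A _ hj).symm
        rw [hsplit, mul_pow, mul_comm ((X j : MvPowerSeries (Fin n) K) ^ (q - 1)) _, mul_assoc,
          ← pow_succ, Nat.sub_add_cancel hq1]
        exact Ideal.mul_mem_left _ _ hXq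
      | zero => rw [mul_zero]; exact zero_mem _
      | add x y hx hy ihx ihy => rw [mul_add]; exact add_mem ihx ihy
      | smul r x hx ihx =>
        rw [smul_eq_mul, ← mul_assoc, mul_comm _ r, mul_assoc]
        exact Ideal.mul_mem_left _ _ ihx
end

section
/- Let α ∈ {0,1}^n be nonzero and let i_1, …, i_r be distinct indices such that i_1 ∈ supp₊(α) and i_2, …, i_r ∉ supp₊(α). If |supp₊(α)| ≥ 2, then (I_α^{[q]} :_S (x_{i_1}⋯x_{i_r})) = I_α^{[q]} + (x_{i_1}^{q-1}); if |supp₊(α)| = 1, then (I_α^{[q]} :_S (x_{i_1}⋯x_{i_r})) = (x_{i_1}^{q-1}). -/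
open MvPowerSeries

section Aux

variable {K : Type*} [Field K] {n : ℕ}

/-- Backward direction: coefficient condition implies membership in the span of
pure powers of variables. -/
theorem mem_span_pow_of_coeff (b : Fin n → ℕ) (A : Finset (Fin n)) :
    ∀ f : MvPowerSeries (Fin n) K,
      (∀ c : Fin n →₀ ℕ, (∀ i ∈ A, c i < b i) → coeff c f = 0) →
      f ∈ Ideal.span ((fun i => (X i : MvPowerSeries (Fin n) K) ^ b i) '' (A : Set (Fin n))) := by
  induction A using Finset.induction_on with
  | empty =>
      intro f hf
      have : f = 0 := MvPowerSeries.ext fun c => by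
        simpa using hf c (by simp)
      simp [this]
  | @insert i0 A' hi0 ih =>
      intro f hf
      set g : MvPowerSeries (Fin n) K :=
        fun m => if m i0 < b i0 then coeff m f else 0 with hgdef
      have hcg : ∀ m : Fin n →₀ ℕ, coeff m g = if m i0 < b i0 then coeff m f else 0 :=
        fun m => rfl
      have hdvd : (X i0 : MvPowerSeries (Fin n) K) ^ b i0 ∣ f - g := by
        refine X_pow_dvd_iff.mpr fun m hm => ?_
        rw [map_sub, hcg, if_pos hm, sub_self]
      obtain ⟨h, hh⟩ := hdvd
      have hgmem : g ∈ Ideal.span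
          ((fun i => (X i : MvPowerSeries (Fin n) K) ^ b i) '' (A' : Set (Fin n))) := by
        refine ih g fun c hc => ?_
        rw [hcg]
        split
        · refine hf c fun i hi => ?_
          rcases Finset.mem_insert.mp hi with rfl | hi'
          · assumption
          · exact hc i hi'
        · rfl
      have hfe : f = g + (X i0 : MvPowerSeries (Fin n) K) ^ b i0 * h := by
        rw [← hh]; ring
      rw [hfe]
      refine Ideal.add_mem _ ?_ ?_
      · refine Ideal.span_mono (Set.image_mono ?_) hgmem
        exact_mod_cast Finset.subset_insert i0 A'
      · exact Ideal.mul_mem_right _ _ (Ideal.subset_span ⟨i0, by simp, rfl⟩)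

/-- Coefficient characterization of membership in the span of pure powers of variables. -/
theorem mem_span_pow_iff (b : Fin n → ℕ) (A : Finset (Fin n)) (f : MvPowerSeries (Fin n) K) :
    f ∈ Ideal.span ((fun i => (X i : MvPowerSeries (Fin n) K) ^ b i) '' (A : Set (Fin n))) ↔
      ∀ c : Fin n →₀ ℕ, (∀ i ∈ A, c i < b i) → coeff c f = 0 := by
  constructor
  · intro hf
    refine Submodule.span_induction
      (p := fun g _ => ∀ c : Fin n →₀ ℕ, (∀ i ∈ A, c i < b i) → coeff c g = 0)
      ?_ ?_ ?_ ?_ hf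
    · rintro x ⟨i, hi, rfl⟩ c hc
      exact X_pow_dvd_iff.mp dvd_rfl c (hc i hi)
    · intro c _; simp
    · intro x y _ _ hx hy c hc
      rw [map_add, hx c hc, hy c hc, add_zero]
    · intro a x _ hx c hc
      rw [smul_eq_mul, coeff_mul]
      refine Finset.sum_eq_zero ?_
      rintro ⟨d, e⟩ hde
      rw [Finset.HasAntidiagonal.mem_antidiagonal] at hde
      have he : ∀ i ∈ A, e i < b i := by
        intro i hi
        have : d i + e i = c i := by
          have := congrArg (fun m : Fin n →₀ ℕ => m i) hde
          simpa using this
        have := hc i hi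
        omega
      rw [hx e he, mul_zero]
  · exact mem_span_pow_of_coeff b A f

/-- The Frobenius power of a span, in characteristic `p`. -/
theorem frobeniusPower_span (p : ℕ) [Fact p.Prime] [CharP K p] (e : ℕ)
    (s : Set (MvPowerSeries (Fin n) K)) :
    frobeniusPower (Ideal.span s) (p ^ e) =
      Ideal.span ((fun f => f ^ p ^ e) '' s) := by
  haveI : CharP (MvPowerSeries (Fin n) K) p := by
    refine charP_of_injective_ringHom (f := (C : K →+* MvPowerSeries (Fin n) K)) ?_ p
    intro a b hab
    simpa using congrArg (constantCoeff) hab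
  have hfun : (fun f : MvPowerSeries (Fin n) K => f ^ p ^ e) =
      iterateFrobenius (MvPowerSeries (Fin n) K) p e :=
    funext fun x => (iterateFrobenius_def p e x).symm
  show Ideal.span ((fun f : MvPowerSeries (Fin n) K => f ^ p ^ e) '' (Ideal.span s : Set _)) = _
  rw [hfun]
  exact Ideal.map_span (iterateFrobenius (MvPowerSeries (Fin n) K) p e) s

theorem prod_X_eq_monomial {r : ℕ} (ι : Fin r → Fin n) (s : Finset (Fin r)) :
    (∏ j ∈ s, (X (ι j) : MvPowerSeries (Fin n) K)) =
      monomial (∑ j ∈ s, Finsupp.single (ι j) 1) 1 := by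
  induction s using Finset.induction_on with
  | empty => simp [monomial_zero_one]
  | @insert j s hj ih =>
      rw [Finset.prod_insert hj, Finset.sum_insert hj, ih, X_def, monomial_mul_monomial, one_mul]

end Aux

theorem colon_frobeniusPower_faceIdeal_monomial {K : Type*} [Field K] (p : ℕ)
    [Fact p.Prime] [CharP K p] (e : ℕ) (he : 1 ≤ e) {n : ℕ} (A : Finset (Fin n))
    (hA : A.Nonempty) (r : ℕ) (hr : 0 < r) (ι : Fin r → Fin n)
    (hι : Function.Injective ι) (h0 : ι ⟨0, hr⟩ ∈ A)
    (hrest : ∀ j : Fin r, j ≠ ⟨0, hr⟩ → ι j ∉ A) :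
    (2 ≤ A.card →
      Submodule.colon (frobeniusPower (faceIdeal K A) (p ^ e))
          (Ideal.span {∏ j, (X (ι j) : MvPowerSeries (Fin n) K)}) =
        frobeniusPower (faceIdeal K A) (p ^ e) ⊔
          Ideal.span {(X (ι ⟨0, hr⟩) : MvPowerSeries (Fin n) K) ^ (p ^ e - 1)}) ∧
    (A.card = 1 →
      Submodule.colon (frobeniusPower (faceIdeal K A) (p ^ e))
          (Ideal.span {∏ j, (X (ι j) : MvPowerSeries (Fin n) K)}) =
        Ideal.span {(X (ι ⟨0, hr⟩) : MvPowerSeries (Fin n) K) ^ (p ^ e - 1)}) := by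
  classical
  have hp2 : 2 ≤ p := (Fact.out : p.Prime).two_le
  have hJ0 : frobeniusPower (faceIdeal K A) (p ^ e) =
      Ideal.span ((fun i => (X i : MvPowerSeries (Fin n) K) ^ p ^ e) '' (A : Set (Fin n))) := by
    rw [faceIdeal, frobeniusPower_span p e, Set.image_image]
  have hq2' : 2 ≤ p ^ e := by
    calc 2 ≤ p := hp2
    _ = p ^ 1 := (pow_one p).symm
    _ ≤ p ^ e := Nat.pow_le_pow_right (by omega) he
  set q : ℕ := p ^ e with hqdef
  clear_value q
  clear hqdef
  rw [hJ0]
  clear hJ0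
  have hq2 : 2 ≤ q := hq2'
  have hq1 : q - 1 + 1 = q := by omega
  set j0 : Fin r := ⟨0, hr⟩ with hj0def
  set i0 : Fin n := ι j0 with hi0def
  set J : Ideal (MvPowerSeries (Fin n) K) :=
    Ideal.span ((fun i => (X i : MvPowerSeries (Fin n) K) ^ q) '' (A : Set (Fin n))) with hJdef
  set μ : Fin n →₀ ℕ := ∑ j, Finsupp.single (ι j) 1 with hμdef
  set M : MvPowerSeries (Fin n) K := ∏ j, (X (ι j) : MvPowerSeries (Fin n) K) with hMdef
  have hM : M = monomial μ 1 := prod_X_eq_monomial ι Finset.univ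
  have hμapp : ∀ i : Fin n, μ i = ∑ j, (if ι j = i then 1 else 0) := by
    intro i
    rw [hμdef, Finsupp.finset_sum_apply]
    exact Finset.sum_congr rfl fun j _ => Finsupp.single_apply
  have hμ0 : μ i0 = 1 := by
    rw [hμapp]
    rw [Finset.sum_congr rfl fun j _ => by
      rw [show ((if ι j = i0 then 1 else 0) : ℕ) = if j = j0 then 1 else 0 from by
        simp [hi0def, hι.eq_iff]]]
    simp
  have hμA : ∀ i ∈ A, i ≠ i0 → μ i = 0 := by
    intro i hi hne
    rw [hμapp]
    refine Finset.sum_eq_zero fun j _ => ?_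
    rw [if_neg]
    intro hji
    by_cases hj : j = j0
    · exact hne (by rw [← hji, hj, hi0def])
    · exact hrest j hj (hji ▸ hi)
  set b : Fin n → ℕ := fun i => if i = i0 then q - 1 else q with hbdef
  set T : Ideal (MvPowerSeries (Fin n) K) :=
    Ideal.span ((fun i => (X i : MvPowerSeries (Fin n) K) ^ b i) '' (A : Set (Fin n))) with hTdef
  have hbi0 : b i0 = q - 1 := by rw [hbdef]; simp
  have hbne : ∀ i : Fin n, i ≠ i0 → b i = q := fun i hi => if_neg hi
  have hMsplit : M = (X i0 : MvPowerSeries (Fin n) K) * ∏ j ∈ Finset.univ.erase j0,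
      (X (ι j) : MvPowerSeries (Fin n) K) := by
    rw [hMdef, hi0def, ← Finset.mul_prod_erase Finset.univ _ (Finset.mem_univ j0)]
  -- key: generators of T times M lie in J
  have hgen : ∀ i ∈ A, (X i : MvPowerSeries (Fin n) K) ^ b i * M ∈ J := by
    intro i hi
    by_cases hii : i = i0
    · have : (X i : MvPowerSeries (Fin n) K) ^ b i * M =
          (X i : MvPowerSeries (Fin n) K) ^ q *
            ∏ j ∈ Finset.univ.erase j0, (X (ι j) : MvPowerSeries (Fin n) K) := by
        rw [hii, hMsplit, ← mul_assoc, ← pow_succ, hbi0, hq1]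
      rw [this]
      exact Ideal.mul_mem_right _ _ (Ideal.subset_span ⟨i, hi, rfl⟩)
    · rw [hbne i hii]
      exact Ideal.mul_mem_right _ _ (Ideal.subset_span ⟨i, hi, rfl⟩)
  -- the colon ideal equals T
  have hcolon : Submodule.colon J (Ideal.span {M}) = T := by
    apply le_antisymm
    · intro f hf
      have hfM : f * M ∈ J :=
        smul_eq_mul (α := MvPowerSeries (Fin n) K) f M ▸
          Submodule.mem_colon.mp hf M (Ideal.subset_span rfl)
      rw [hTdef, mem_span_pow_iff]
      intro c hc
      have hcf : coeff c f = coeff (c + μ) (f * M) := by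
        rw [hM, coeff_add_mul_monomial, mul_one]
      rw [hcf]
      rw [hJdef, mem_span_pow_iff] at hfM
      refine hfM (c + μ) fun i hi => ?_
      rw [Finsupp.add_apply]
      by_cases hii : i = i0
      · have h1 := hc i hi
        rw [hii] at h1 ⊢
        rw [hbi0] at h1
        rw [hμ0]
        omega
      · have h1 := hc i hi
        rw [hbne i hii] at h1
        rw [hμA i hi hii]
        omega
    · rw [hTdef, Ideal.span_le]
      rintro x ⟨i, hi, rfl⟩
      rw [SetLike.mem_coe, Submodule.mem_colon]
      intro g hg
      obtain ⟨c, rfl⟩ := Ideal.mem_span_singleton'.mp hg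
      rw [smul_eq_mul, show (X i : MvPowerSeries (Fin n) K) ^ b i * (c * M) =
        c * ((X i : MvPowerSeries (Fin n) K) ^ b i * M) from by ring]
      exact Ideal.mul_mem_left _ _ (hgen i hi)
  -- T = J ⊔ (X i0 ^ (q-1))
  have hT : T = J ⊔ Ideal.span {(X i0 : MvPowerSeries (Fin n) K) ^ (q - 1)} := by
    apply le_antisymm
    · rw [hTdef, Ideal.span_le]
      rintro x ⟨i, hi, rfl⟩
      dsimp only
      by_cases hii : i = i0
      · rw [hii, hbi0]
        exact Submodule.mem_sup_right (Ideal.subset_span rfl)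
      · rw [hbne i hii]
        exact Submodule.mem_sup_left (Ideal.subset_span ⟨i, hi, rfl⟩)
    · refine sup_le ?_ ?_
      · rw [hJdef, Ideal.span_le]
        rintro x ⟨i, hi, rfl⟩
        dsimp only
        by_cases hii : i = i0
        · have hx : (X i : MvPowerSeries (Fin n) K) ^ q =
              (X i : MvPowerSeries (Fin n) K) ^ b i * X i := by
            rw [hii, hbi0, ← pow_succ, hq1]
          rw [hx]
          exact Ideal.mul_mem_right _ _ (Ideal.subset_span ⟨i, hi, rfl⟩)
        · have hx : (X i : MvPowerSeries (Fin n) K) ^ q =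
              (X i : MvPowerSeries (Fin n) K) ^ b i := by rw [hbne i hii]
          rw [hx]
          exact Ideal.subset_span ⟨i, hi, rfl⟩
      · rw [Ideal.span_le, Set.singleton_subset_iff]
        have : (X i0 : MvPowerSeries (Fin n) K) ^ (q - 1) =
            (X i0 : MvPowerSeries (Fin n) K) ^ b i0 := by rw [hbi0]
        rw [this]
        exact Ideal.subset_span ⟨i0, h0, rfl⟩
  constructor
  · intro _
    rw [hcolon, hT]
  · intro hcard
    obtain ⟨a, ha⟩ := Finset.card_eq_one.mp hcard
    have hai : a = i0 := by
      have h1 := h0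
      rw [ha, Finset.mem_singleton] at h1
      exact h1.symm
    have ha' : A = {i0} := by rw [ha, hai]
    have hJle : J ≤ Ideal.span {(X i0 : MvPowerSeries (Fin n) K) ^ (q - 1)} := by
      rw [hJdef, ha']
      simp only [Finset.coe_singleton, Set.image_singleton]
      exact Ideal.span_singleton_le_span_singleton.mpr (pow_dvd_pow _ (by omega))
    rw [hcolon, hT]
    exact sup_eq_right.mpr hJle
end

section
/- Let I ⊆ S be a squarefree monomial ideal, i.e. a finite intersection of face ideals I_{α_i} with nonzero α_i ∈ {0,1}^n. Then the colon ideal (I^{[q]} :_S I) is generated by finitely many monomials x^γ = x_1^{γ_1}⋯x_n^{γ_n} all of whose exponents satisfy γ_i ∈ {0, q−1, q}. -/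
open MvPowerSeries

section Aux

open Finsupp

variable {K : Type*} [Field K] {n : ℕ}

/-- The monomial ideal generated by the monomials with exponents in `Γ`. -/
noncomputable def spanM (K : Type*) [Field K] {n : ℕ} (Γ : Set (Fin n →₀ ℕ)) :
    Ideal (MvPowerSeries (Fin n) K) :=
  Ideal.span ((fun γ => MvPowerSeries.monomial (R := K) γ (1 : K)) '' Γ)

theorem coeff_cond_of_mem_spanM {Γ : Set (Fin n →₀ ℕ)} {f : MvPowerSeries (Fin n) K}
    (hf : f ∈ spanM K Γ) : ∀ d, MvPowerSeries.coeff (R := K) d f ≠ 0 → ∃ γ ∈ Γ, γ ≤ d := by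
  classical
  refine Submodule.span_induction ?_ ?_ ?_ ?_ hf
  · rintro x ⟨γ, hγ, rfl⟩ d hd
    rw [MvPowerSeries.coeff_monomial] at hd
    by_cases h : d = γ
    · exact ⟨γ, hγ, h.ge⟩
    · simp [h] at hd
  · intro d hd
    simp at hd
  · intro x y _ _ ihx ihy d hd
    rw [map_add] at hd
    have : MvPowerSeries.coeff (R := K) d x ≠ 0 ∨ MvPowerSeries.coeff (R := K) d y ≠ 0 := by
      by_contra h
      push_neg at h
      rw [h.1, h.2, add_zero] at hd
      exact hd rfl
    rcases this with h | h
    · exact ihx d h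
    · exact ihy d h
  · intro r x _ ih d hd
    rw [smul_eq_mul, MvPowerSeries.coeff_mul] at hd
    obtain ⟨pq, hpq, hne⟩ := Finset.exists_ne_zero_of_sum_ne_zero hd
    obtain ⟨γ, hγ, hle⟩ := ih pq.2 (right_ne_zero_of_mul hne)
    rw [Finset.HasAntidiagonal.mem_antidiagonal] at hpq
    exact ⟨γ, hγ, hle.trans (hpq ▸ le_add_self)⟩

theorem mem_spanM_of_coeff_cond {Γ : Finset (Fin n →₀ ℕ)} {f : MvPowerSeries (Fin n) K}
    (hf : ∀ d, MvPowerSeries.coeff (R := K) d f ≠ 0 → ∃ γ ∈ Γ, γ ≤ d) : f ∈ spanM K (↑Γ) := by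
  classical
  set pick : (Fin n →₀ ℕ) → Option (Fin n →₀ ℕ) := fun d =>
    if h : ∃ γ ∈ Γ, γ ≤ d then some h.choose else none with hpickdef
  have hpick : ∀ d γ, pick d = Option.some γ → γ ∈ Γ ∧ γ ≤ d := by
    intro d γ h
    by_cases hd : ∃ γ ∈ Γ, γ ≤ d
    · simp only [hpickdef, dif_pos hd, Option.some.injEq] at h
      exact h ▸ ⟨hd.choose_spec.1, hd.choose_spec.2⟩
    · simp [hpickdef, dif_neg hd] at h
  -- the pieces
  set g : (Fin n →₀ ℕ) → MvPowerSeries (Fin n) K := fun γ =>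
    (fun d => if pick (d + γ) = Option.some γ then MvPowerSeries.coeff (R := K) (d + γ) f else 0) with hgdef
  have key : f = ∑ γ ∈ Γ, MvPowerSeries.monomial (R := K) γ (1 : K) * g γ := by
    ext d
    rw [map_sum]
    have hterm : ∀ γ ∈ Γ,
        MvPowerSeries.coeff (R := K) d (MvPowerSeries.monomial (R := K) γ (1 : K) * g γ) =
          if γ ≤ d ∧ pick d = Option.some γ then MvPowerSeries.coeff (R := K) d f else 0 := by
      intro γ _
      rw [MvPowerSeries.coeff_monomial_mul]
      by_cases h : γ ≤ d
      · rw [if_pos h, one_mul]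
        have hdc : d - γ + γ = d := tsub_add_cancel_of_le h
        have : MvPowerSeries.coeff (R := K) (d - γ) (g γ) =
            if pick d = Option.some γ then MvPowerSeries.coeff (R := K) d f else 0 := by
          show (if pick (d - γ + γ) = Option.some γ then MvPowerSeries.coeff (R := K) (d - γ + γ) f else 0) = _
          rw [hdc]
        rw [this]
        by_cases hp : pick d = Option.some γ
        · rw [if_pos hp, if_pos ⟨h, hp⟩]
        · rw [if_neg hp, if_neg (fun hc => hp hc.2)]
      · rw [if_neg h, if_neg (fun hc => h hc.1)]
    rw [Finset.sum_congr rfl hterm]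
    by_cases hd : MvPowerSeries.coeff (R := K) d f = 0
    · rw [hd]
      exact (Finset.sum_eq_zero fun γ _ => by split <;> rfl).symm
    · have hex : ∃ γ ∈ Γ, γ ≤ d := hf d hd
      have hps : pick d = Option.some hex.choose := by simp only [hpickdef, dif_pos hex]
      have hc := hpick d hex.choose hps
      rw [Finset.sum_eq_single hex.choose]
      · rw [if_pos ⟨hc.2, hps⟩]
      · intro γ hγ hne
        rw [if_neg]
        rintro ⟨-, hp⟩
        exact hne (by rw [hp] at hps; exact (Option.some.injEq _ _ ▸ hps : _))
      · intro hno
        exact absurd hc.1 hno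
  rw [key]
  refine Ideal.sum_mem _ fun γ hγ => ?_
  exact Ideal.mul_mem_right _ _ (Ideal.subset_span ⟨γ, hγ, rfl⟩)

theorem mem_spanM_iff {Γ : Finset (Fin n →₀ ℕ)} {f : MvPowerSeries (Fin n) K} :
    f ∈ spanM K (↑Γ) ↔ ∀ d, MvPowerSeries.coeff (R := K) d f ≠ 0 → ∃ γ ∈ Γ, γ ≤ d :=
  ⟨fun h => coeff_cond_of_mem_spanM h, mem_spanM_of_coeff_cond⟩

theorem monomial_one_pow (γ : Fin n →₀ ℕ) (m : ℕ) :
    (MvPowerSeries.monomial (R := K) γ (1 : K)) ^ m = MvPowerSeries.monomial (R := K) (m • γ) (1 : K) := by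
  induction m with
  | zero => simp
  | succ m ih => rw [pow_succ, ih, MvPowerSeries.monomial_mul_monomial, one_mul, succ_nsmul]

theorem prod_X_pow (γ : Fin n → ℕ) :
    (∏ i, (X i : MvPowerSeries (Fin n) K) ^ γ i) =
      MvPowerSeries.monomial (R := K) (Finsupp.equivFunOnFinite.symm γ) (1 : K) := by
  classical
  have h : ∀ t : Finset (Fin n),
      (∏ i ∈ t, (X i : MvPowerSeries (Fin n) K) ^ γ i) =
        MvPowerSeries.monomial (R := K) (∑ i ∈ t, Finsupp.single i (γ i)) (1 : K) := by
    intro t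
    induction t using Finset.induction with
    | empty => simp
    | insert _ _ hx ih =>
      rw [Finset.prod_insert hx, Finset.sum_insert hx, ih, MvPowerSeries.X_pow_eq,
        MvPowerSeries.monomial_mul_monomial, one_mul]
  rw [h Finset.univ]
  have h2 : (∑ i, Finsupp.single i (γ i)) = Finsupp.equivFunOnFinite.symm γ := by
    apply Finsupp.ext
    intro j
    rw [Finsupp.finset_sum_apply]
    simp [Finsupp.single_apply]
  rw [h2]

theorem frobeniusPower_spanM (p : ℕ) [Fact p.Prime] [CharP K p] (e : ℕ)
    (Γ₀ : Finset (Fin n →₀ ℕ)) :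
    frobeniusPower (spanM K (↑Γ₀)) (p ^ e) =
      spanM K ((Γ₀.image (fun γ => p ^ e • γ) : Finset (Fin n →₀ ℕ)) : Set (Fin n →₀ ℕ)) := by
  classical
  haveI : CharP (MvPowerSeries (Fin n) K) p := charP_of_injective_algebraMap' K p
  apply le_antisymm
  · rw [frobeniusPower, Ideal.span_le]
    rintro _ ⟨gg, hgg, rfl⟩
    have : ∀ x ∈ spanM K (↑Γ₀ : Set (Fin n →₀ ℕ)),
        x ^ p ^ e ∈ spanM K ((Γ₀.image (fun γ => p ^ e • γ) : Finset (Fin n →₀ ℕ)) : Set (Fin n →₀ ℕ)) := by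
      intro x hx
      refine Submodule.span_induction ?_ ?_ ?_ ?_ hx
      · rintro _ ⟨γ, hγ, rfl⟩
        rw [monomial_one_pow]
        exact Ideal.subset_span ⟨p ^ e • γ, by simpa using Finset.mem_image_of_mem _ hγ, rfl⟩
      · rw [zero_pow (pow_ne_zero e (Fact.out (p := p.Prime)).ne_zero)]
        exact Ideal.zero_mem _
      · intro x y _ _ ihx ihy
        rw [add_pow_char_pow x y p e]
        exact Ideal.add_mem _ ihx ihy
      · intro r x _ ihx
        rw [smul_eq_mul, mul_pow]
        exact Ideal.mul_mem_left _ _ ihx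
    exact this gg hgg
  · rw [spanM, Ideal.span_le]
    rintro _ ⟨δ, hδ, rfl⟩
    rw [Finset.coe_image] at hδ
    obtain ⟨γ, hγ, rfl⟩ := hδ
    show (MvPowerSeries.monomial (R := K) (p ^ e • γ) (1 : K)) ∈ _
    rw [← monomial_one_pow]
    exact Ideal.subset_span ⟨MvPowerSeries.monomial (R := K) γ 1,
      Ideal.subset_span ⟨γ, hγ, rfl⟩, rfl⟩

theorem mem_colon_spanM_iff (Γq Γ₀ : Finset (Fin n →₀ ℕ)) (r : MvPowerSeries (Fin n) K) :
    r ∈ Submodule.colon (spanM K (↑Γq)) ((spanM K (↑Γ₀) : Ideal (MvPowerSeries (Fin n) K)) : Set (MvPowerSeries (Fin n) K)) ↔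
      ∀ d, MvPowerSeries.coeff (R := K) d r ≠ 0 → ∀ γ ∈ Γ₀, ∃ δ ∈ Γq, δ ≤ d + γ := by
  classical
  rw [Submodule.mem_colon]
  constructor
  · intro h d hd γ hγ
    have hm : MvPowerSeries.monomial (R := K) γ (1 : K) ∈ spanM K (↑Γ₀ : Set (Fin n →₀ ℕ)) :=
      Ideal.subset_span ⟨γ, hγ, rfl⟩
    have hrm := h _ hm
    rw [smul_eq_mul] at hrm
    refine coeff_cond_of_mem_spanM hrm (d + γ) ?_
    rw [MvPowerSeries.coeff_add_mul_monomial, mul_one]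
    exact hd
  · intro h x hx
    refine Submodule.span_induction ?_ ?_ ?_ ?_ hx
    · rintro _ ⟨γ, hγ, rfl⟩
      rw [smul_eq_mul]
      refine mem_spanM_of_coeff_cond fun c hc => ?_
      rw [MvPowerSeries.coeff_mul_monomial] at hc
      by_cases hle : γ ≤ c
      · rw [if_pos hle, mul_one] at hc
        obtain ⟨δ, hδ, hδle⟩ := h (c - γ) hc γ hγ
        exact ⟨δ, hδ, hδle.trans_eq (tsub_add_cancel_of_le hle)⟩
      · rw [if_neg hle] at hc
        exact absurd rfl hc
    · rw [smul_zero]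
      exact Ideal.zero_mem _
    · intro x y _ _ ihx ihy
      rw [smul_add]
      exact Ideal.add_mem _ ihx ihy
    · intro a x _ ihx
      rw [smul_comm]
      exact Submodule.smul_mem _ a ihx

end Aux

open scoped Classical in
theorem colon_frobeniusPower_generated_by_special_monomials {K : Type*} [Field K] (p : ℕ)
    [Fact p.Prime] [CharP K p] (e : ℕ) (he : 1 ≤ e) {n : ℕ} (s : ℕ) (hs : 0 < s)
    (A : Fin s → Finset (Fin n)) (hA : ∀ i, (A i).Nonempty) :
    ∃ Γ : Finset (Fin n → ℕ),
      (∀ γ ∈ Γ, ∀ i, γ i = 0 ∨ γ i = p ^ e - 1 ∨ γ i = p ^ e) ∧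
      Submodule.colon (frobeniusPower (⨅ i, faceIdeal K (A i)) (p ^ e))
          (⨅ i, faceIdeal K (A i)) =
        Ideal.span ((fun γ : Fin n → ℕ =>
          ∏ i, (X i : MvPowerSeries (Fin n) K) ^ γ i) '' Γ) := by
  classical
  set q := p ^ e with hq
  have hq1 : 1 ≤ q := Nat.one_le_iff_ne_zero.mpr (pow_ne_zero e (Fact.out (p := p.Prime)).ne_zero)
  -- the exponent vector of the generator attached to a choice function `f`
  set gam : (Fin s → Fin n) → (Fin n →₀ ℕ) := fun f =>
    Finsupp.equivFunOnFinite.symm (fun j => if j ∈ Finset.image f Finset.univ then 1 else 0)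
    with hgam
  have gam_apply : ∀ f j, gam f j = if j ∈ Finset.image f Finset.univ then 1 else 0 :=
    fun f j => rfl
  have gam01 : ∀ f j, gam f j = 0 ∨ gam f j = 1 := by
    intro f j
    rw [gam_apply]
    split
    · exact Or.inr rfl
    · exact Or.inl rfl
  set Φ : Finset (Fin s → Fin n) := Finset.univ.filter (fun f => ∀ i, f i ∈ A i) with hΦ
  set Γ₀ : Finset (Fin n →₀ ℕ) := Φ.image gam with hΓ₀
  -- Step 1 : the ideal I is the monomial ideal on Γ₀
  have step1 : (⨅ i, faceIdeal K (A i)) = spanM K (↑Γ₀) := by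
    ext f
    rw [Submodule.mem_iInf, mem_spanM_iff]
    have hface : ∀ i, faceIdeal K (A i) =
        spanM K ↑((A i).image fun j => Finsupp.single j (1 : ℕ)) := by
      intro i
      rw [faceIdeal, spanM]
      congr 1
      rw [Finset.coe_image, Set.image_image]
      refine Set.image_congr fun j _ => ?_
      rw [← pow_one (X j : MvPowerSeries (Fin n) K), MvPowerSeries.X_pow_eq]
    constructor
    · intro h d hd
      -- for each i choose a generator dividing d
      have hch : ∀ i : Fin s, ∃ j ∈ A i, (1 : ℕ) ≤ d j := by
        intro i
        have := (mem_spanM_iff.mp ((hface i) ▸ h i)) d hd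
        obtain ⟨γ, hγ, hle⟩ := this
        rw [Finset.mem_image] at hγ
        obtain ⟨j, hj, rfl⟩ := hγ
        exact ⟨j, hj, Finsupp.single_le_iff.mp hle⟩
      choose ch hch1 hch2 using hch
      refine ⟨gam ch, Finset.mem_image_of_mem _ (Finset.mem_filter.mpr ⟨Finset.mem_univ _, hch1⟩), ?_⟩
      rw [Finsupp.le_def]
      intro j
      rw [gam_apply]
      split
      · next hmem =>
        obtain ⟨i, -, rfl⟩ := Finset.mem_image.mp hmem
        exact hch2 i
      · exact Nat.zero_le _
    · intro h i
      rw [hface i, mem_spanM_iff]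
      intro d hd
      obtain ⟨γ, hγ, hle⟩ := h d hd
      rw [hΓ₀, Finset.mem_image] at hγ
      obtain ⟨f, hf, rfl⟩ := hγ
      have hfA : ∀ i, f i ∈ A i := (Finset.mem_filter.mp hf).2
      refine ⟨Finsupp.single (f i) 1, Finset.mem_image_of_mem _ (hfA i), ?_⟩
      rw [Finsupp.single_le_iff]
      refine le_trans ?_ (Finsupp.le_def.mp hle (f i))
      rw [gam_apply]
      rw [if_pos (Finset.mem_image_of_mem f (Finset.mem_univ i))]
    -- done
  -- Step 2 : Frobenius power
  set Γq : Finset (Fin n →₀ ℕ) := Γ₀.image (q • ·) with hΓq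
  have step2 : frobeniusPower (⨅ i, faceIdeal K (A i)) q = spanM K (↑Γq) := by
    rw [step1]
    exact frobeniusPower_spanM p e Γ₀
  -- the combinatorial condition
  set F : (Fin n →₀ ℕ) → Prop := fun d => ∀ γ ∈ Γ₀, ∃ δ ∈ Γq, δ ≤ d + γ with hF
  -- truncation
  set trunc : (Fin n →₀ ℕ) → (Fin n →₀ ℕ) := fun d =>
    Finsupp.equivFunOnFinite.symm
      (fun j => if q ≤ d j then q else if q - 1 ≤ d j then q - 1 else 0) with htrunc
  have trunc_apply : ∀ d j,
      trunc d j = if q ≤ d j then q else if q - 1 ≤ d j then q - 1 else 0 := fun d j => rfl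
  -- the candidate set : all finsupps with values in {0, q-1, q}
  set C : Finset (Fin n →₀ ℕ) := Finset.image
    (fun v : Fin n → Fin 3 => Finsupp.equivFunOnFinite.symm
      (fun j => if v j = 0 then 0 else if v j = 1 then q - 1 else q)) Finset.univ with hC
  have hCval : ∀ γ ∈ C, ∀ j, γ j = 0 ∨ γ j = q - 1 ∨ γ j = q := by
    intro γ hγ j
    rw [hC, Finset.mem_image] at hγ
    obtain ⟨v, -, rfl⟩ := hγ
    show (if v j = 0 then (0:ℕ) else if v j = 1 then q - 1 else q) = 0 ∨
      (if v j = 0 then (0:ℕ) else if v j = 1 then q - 1 else q) = q - 1 ∨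
      (if v j = 0 then (0:ℕ) else if v j = 1 then q - 1 else q) = q
    split
    · exact Or.inl rfl
    · split
      · exact Or.inr (Or.inl rfl)
      · exact Or.inr (Or.inr rfl)
  have htruncC : ∀ d, trunc d ∈ C := by
    intro d
    rw [hC, Finset.mem_image]
    refine ⟨fun j => if q ≤ d j then 2 else if q - 1 ≤ d j then 1 else 0, Finset.mem_univ _, ?_⟩
    apply Finsupp.ext
    intro j
    rw [trunc_apply]
    show (if (if q ≤ d j then (2:Fin 3) else if q - 1 ≤ d j then 1 else 0) = 0 then 0
        else if (if q ≤ d j then (2:Fin 3) else if q - 1 ≤ d j then 1 else 0) = 1 then q - 1 else q)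
      = _
    by_cases h1 : q ≤ d j
    · rw [if_pos h1, if_pos h1, if_neg (by decide : ¬ ((2:Fin 3) = 0)),
        if_neg (by decide : ¬ ((2:Fin 3) = 1))]
    · rw [if_neg h1, if_neg h1]
      by_cases h2 : q - 1 ≤ d j
      · rw [if_pos h2, if_pos h2, if_neg (by decide : ¬ ((1:Fin 3) = 0)), if_pos rfl]
      · rw [if_neg h2, if_neg h2, if_pos rfl]
  set ΓF : Finset (Fin n →₀ ℕ) := C.filter F with hΓF
  -- key combinatorial equivalence
  have step4 : ∀ d, F d ↔ ∃ γ ∈ ΓF, γ ≤ d := by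
    intro d
    constructor
    · intro hd
      refine ⟨trunc d, ?_, ?_⟩
      · rw [hΓF, Finset.mem_filter]
        refine ⟨htruncC d, ?_⟩
        -- trunc d satisfies F
        intro γ₀ hγ₀
        obtain ⟨δ, hδ, hδle⟩ := hd γ₀ hγ₀
        refine ⟨δ, hδ, ?_⟩
        -- δ = q • (gam g) for some g, γ₀ = gam f
        rw [hΓq, Finset.mem_image] at hδ
        obtain ⟨γg, hγg, rfl⟩ := hδ
        rw [hΓ₀, Finset.mem_image] at hγg hγ₀
        obtain ⟨g, -, rfl⟩ := hγg
        obtain ⟨f, -, rfl⟩ := hγ₀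
        rw [Finsupp.le_def]
        intro j
        have hδj : (q • gam g) j = q * gam g j := rfl
        have hle := Finsupp.le_def.mp hδle j
        rw [Finsupp.add_apply] at hle ⊢
        rw [hδj] at hle ⊢
        rcases gam01 g j with h0 | h1
        · rw [h0, mul_zero]
          exact Nat.zero_le _
        · rw [h1, mul_one] at hle ⊢
          rcases gam01 f j with hf0 | hf1
          · rw [hf0, add_zero] at hle ⊢
            rw [trunc_apply, if_pos hle]
          · rw [hf1] at hle ⊢
            have hd1 : q - 1 ≤ d j := by omega
            rw [trunc_apply]
            by_cases h : q ≤ d j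
            · rw [if_pos h]; omega
            · rw [if_neg h, if_pos hd1]; omega
      · rw [Finsupp.le_def]
        intro j
        rw [trunc_apply]
        split
        · next h => exact h
        · split
          · next h => exact h
          · exact Nat.zero_le _
    · rintro ⟨γ, hγ, hle⟩
      rw [hΓF, Finset.mem_filter] at hγ
      intro γ₀ hγ₀
      obtain ⟨δ, hδ, hδle⟩ := hγ.2 γ₀ hγ₀
      exact ⟨δ, hδ, hδle.trans (add_le_add_left hle γ₀)⟩
  -- assemble
  refine ⟨ΓF.image (fun γ : Fin n →₀ ℕ => (⇑γ : Fin n → ℕ)), ?_, ?_⟩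
  · intro γ hγ i
    rw [Finset.mem_image] at hγ
    obtain ⟨γ', hγ', rfl⟩ := hγ
    rw [hΓF, Finset.mem_filter] at hγ'
    exact hCval γ' hγ'.1 i
  · rw [step2, show (⨅ i, ((faceIdeal K (A i) : Ideal _) : Set (MvPowerSeries (Fin n) K))) =
        ((⨅ i, faceIdeal K (A i) : Ideal _) : Set _) by ext x; simp [Submodule.mem_iInf], step1]
    have hset : ((fun γ : Fin n → ℕ => ∏ i, (X i : MvPowerSeries (Fin n) K) ^ γ i) ''
        ↑(ΓF.image (fun γ : Fin n →₀ ℕ => (⇑γ : Fin n → ℕ)))) =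
        ((fun γ => MvPowerSeries.monomial (R := K) γ (1 : K)) '' ↑ΓF) := by
      rw [Finset.coe_image, ← Set.image_comp]
      refine Set.image_congr fun γ _ => ?_
      simp only [Function.comp_apply]
      rw [prod_X_pow, Finsupp.equivFunOnFinite_symm_coe]
    have hmain : Submodule.colon (spanM K ((Γq : Finset (Fin n →₀ ℕ)) : Set (Fin n →₀ ℕ)))
        ((spanM K ((Γ₀ : Finset (Fin n →₀ ℕ)) : Set (Fin n →₀ ℕ)) : Ideal (MvPowerSeries (Fin n) K)) : Set (MvPowerSeries (Fin n) K)) =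
        spanM K ((ΓF : Finset (Fin n →₀ ℕ)) : Set (Fin n →₀ ℕ)) := by
      ext r
      rw [mem_colon_spanM_iff, mem_spanM_iff]
      constructor
      · intro h d hd
        exact (step4 d).mp (fun γ hγ => h d hd γ hγ)
      · intro h d hd γ hγ
        exact (step4 d).mpr (h d hd) γ hγ
    exact hmain.trans (congrArg Ideal.span hset.symm)
end

section
/- Let I ⊆ S be a squarefree monomial ideal (a finite intersection of face ideals I_{α_i} with nonzero α_i ∈ {0,1}^n whose supports are pairwise incomparable). Fix a function σ : {1,…,n} → {zero, top−1, top}, and for a power b of p let m_b(σ) denote the monomial whose i-th exponent is 0, b−1, or b according as σ(i) = zero, top−1, or top. Then for all integers e, e′ ≥ 1: m_{p^e}(σ) ∈ (I^{[p^e]} :_S I) if and only if m_{p^{e′}}(σ) ∈ (I^{[p^{e′}]} :_S I). (Hence the description of (I^{[q]} :_S I) is the same for all q = p^e, and it suffices to compute (I^{[p]} :_S I).) -/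
open MvPowerSeries

/-- The exponent vector of the monomial `m_b(σ)`: the `i`-th exponent is `0`, `b - 1`
or `b` according as `σ i = 0` (zero), `σ i = 1` (top−1) or `σ i = 2` (top). -/
def sigmaExp {n : ℕ} (σ : Fin n → Fin 3) (b : ℕ) : Fin n → ℕ :=
  fun i => if σ i = 0 then 0 else if σ i = 1 then b - 1 else b

namespace FrobAux

variable {K : Type*} [Field K] {n : ℕ}

section expIdeal

/-- The "monomial support" ideal: power series all of whose monomials satisfy an
upward-closed condition `E`. -/
noncomputable def expIdeal (K : Type*) [Field K] {n : ℕ} (E : (Fin n →₀ ℕ) → Prop)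
    (hE : ∀ a b : Fin n →₀ ℕ, E a → E (a + b)) : Ideal (MvPowerSeries (Fin n) K) where
  carrier := {f | ∀ d, coeff (R := K) d f ≠ 0 → E d}
  zero_mem' := by intro d hd; simp at hd
  add_mem' := by
    intro f g hf hg d hd
    rw [map_add] at hd
    by_cases h1 : coeff (R := K) d f = 0
    · exact hg d (by simpa [h1] using hd)
    · exact hf d h1
  smul_mem' := by
    intro c f hf d hd
    rw [smul_eq_mul, coeff_mul] at hd
    obtain ⟨p, hp, hne⟩ := Finset.exists_ne_zero_of_sum_ne_zero hd
    rw [Finset.HasAntidiagonal.mem_antidiagonal] at hp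
    have h2 := hf p.2 (right_ne_zero_of_mul hne)
    have := hE p.2 p.1 h2
    rwa [add_comm, hp] at this

lemma mem_expIdeal {E : (Fin n →₀ ℕ) → Prop} {hE : ∀ a b : Fin n →₀ ℕ, E a → E (a + b)}
    {f : MvPowerSeries (Fin n) K} :
    f ∈ expIdeal K E hE ↔ ∀ d, coeff (R := K) d f ≠ 0 → E d := Iff.rfl

end expIdeal

/-- Monomial division: if every monomial of `f` is divisible by `x^c`, then `x^c ∣ f`. -/
lemma exists_eq_monomial_mul (c : Fin n →₀ ℕ) (f : MvPowerSeries (Fin n) K)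
    (h : ∀ d, coeff (R := K) d f ≠ 0 → c ≤ d) :
    ∃ g, f = monomial (R := K) c 1 * g := by
  refine ⟨id (α := MvPowerSeries (Fin n) K) (fun a => coeff (R := K) (c + a) f), ?_⟩
  ext d
  rw [coeff_monomial_mul]
  split_ifs with hc
  · rw [one_mul]
    show coeff (R := K) d f = coeff (R := K) (c + (d - c)) f
    rw [add_tsub_cancel_of_le hc]
  · by_contra hne
    exact hc (h d fun h0 => hne (h0 ▸ rfl))

lemma monomial_pow (a : Fin n →₀ ℕ) (r : K) (m : ℕ) :
    (monomial (R := K) a r) ^ m = monomial (R := K) (m • a) (r ^ m) := by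
  induction m with
  | zero => simp [monomial_zero_one]
  | succ m ih =>
      rw [pow_succ, ih, monomial_mul_monomial, succ_nsmul, pow_succ]

/-- Total degree of an exponent. -/
def deg (d : Fin n →₀ ℕ) : ℕ := ∑ i, d i

lemma deg_mono {a b : Fin n →₀ ℕ} (h : a ≤ b) : deg a ≤ deg b :=
  Finset.sum_le_sum fun i _ => h i

variable (p : ℕ) [Fact p.Prime] [CharP K p]

instance : CharP (MvPowerSeries (Fin n) K) p :=
  charP_of_injective_ringHom (f := C (σ := Fin n) (R := K))
    (fun a b hab => by
      have := congrArg (constantCoeff (σ := Fin n) (R := K)) hab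
      simpa using this) p

lemma coeff_pow_prime {f : MvPowerSeries (Fin n) K} {d : Fin n →₀ ℕ}
    (h : coeff (R := K) d (f ^ p) ≠ 0) : ∃ d', d = p • d' ∧ coeff (R := K) d' f ≠ 0 := by
  classical
  set D : ℕ := deg d with hD
  set bound : Fin n →₀ ℕ := Finsupp.equivFunOnFinite.symm (fun _ => D) with hbound
  set T : Finset (Fin n →₀ ℕ) := Finset.Iic bound with hT
  set g : MvPowerSeries (Fin n) K := ∑ a ∈ T, monomial (R := K) a (coeff (R := K) a f) with hg
  have hcg : ∀ a, coeff (R := K) a g = if a ∈ T then coeff (R := K) a f else 0 := by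
    intro a
    rw [hg, map_sum]
    simp_rw [coeff_monomial]
    exact Finset.sum_ite_eq T a (fun b => coeff (R := K) b f)
  have hsplit : f ^ p = g ^ p + (f - g) ^ p := by
    have : f = g + (f - g) := by ring
    conv_lhs => rw [this]
    exact add_pow_char _ _ _
  have hrest : coeff (R := K) d ((f - g) ^ p) = 0 := by
    have hp1 : p = 1 + (p - 1) := by
      have := (Fact.out : p.Prime).two_le; omega
    rw [hp1, pow_add, pow_one, coeff_mul]
    refine Finset.sum_eq_zero fun q hq => ?_
    rw [Finset.HasAntidiagonal.mem_antidiagonal] at hq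
    by_contra hne
    have h1 : coeff (R := K) q.1 (f - g) ≠ 0 := left_ne_zero_of_mul hne
    have h2 : q.1 ∉ T := by
      intro hmem
      apply h1
      rw [map_sub, hcg, if_pos hmem, sub_self]
    rw [hT, Finset.mem_Iic] at h2
    obtain ⟨i, hi⟩ := not_forall.mp (fun hle => h2 (Finsupp.le_def.mpr hle))
    push_neg at hi
    have hbi : bound i = D := by simp [hbound]
    have hdle : q.1 ≤ d := by
      rw [← hq]; exact le_add_right le_rfl
    have hle1 : deg q.1 ≤ D := deg_mono hdle
    have hle2 : q.1 i ≤ deg q.1 :=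
      Finset.single_le_sum (fun j _ => Nat.zero_le _) (Finset.mem_univ i)
    omega
  rw [hsplit, map_add, hrest, add_zero] at h
  have hgp : g ^ p = ∑ a ∈ T, monomial (R := K) (p • a) ((coeff (R := K) a f) ^ p) := by
    rw [hg]
    rw [show (∑ a ∈ T, monomial (R := K) a (coeff (R := K) a f)) ^ p
        = frobenius (MvPowerSeries (Fin n) K) p (∑ a ∈ T, monomial (R := K) a (coeff (R := K) a f)) from rfl]
    rw [map_sum]
    exact Finset.sum_congr rfl fun a _ => by
      rw [frobenius_def, monomial_pow]
  rw [hgp, map_sum] at h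
  obtain ⟨a, ha, hne⟩ := Finset.exists_ne_zero_of_sum_ne_zero h
  rw [coeff_monomial] at hne
  split_ifs at hne with hda
  · exact ⟨a, hda, fun h0 => hne (by rw [h0, zero_pow (Fact.out : p.Prime).ne_zero])⟩
  · exact absurd rfl hne

lemma coeff_pow_q {e : ℕ} {f : MvPowerSeries (Fin n) K} {d : Fin n →₀ ℕ}
    (h : coeff (R := K) d (f ^ p ^ e) ≠ 0) : ∃ d', d = p ^ e • d' ∧ coeff (R := K) d' f ≠ 0 := by
  induction e generalizing f d with
  | zero => exact ⟨d, by simp, by simpa using h⟩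
  | succ e ih =>
      rw [pow_succ, mul_comm, pow_mul] at h
      obtain ⟨d₁, hd₁, hne₁⟩ := ih h
      obtain ⟨d', hd', hne'⟩ := coeff_pow_prime p hne₁
      exact ⟨d', by rw [hd₁, hd', smul_smul, pow_succ], hne'⟩

variable {s : ℕ} (A : Fin s → Finset (Fin n))

/-- `B` is a hitting set for the family `A`. -/
def Hits (B : Finset (Fin n)) : Prop := ∀ j, ∃ i ∈ A j, i ∈ B

/-- indicator exponent of a set `B`. -/
noncomputable def ind (B : Finset (Fin n)) : Fin n →₀ ℕ :=
  Finsupp.equivFunOnFinite.symm (fun i => if i ∈ B then 1 else 0)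

lemma ind_apply (B : Finset (Fin n)) (i : Fin n) : ind B i = if i ∈ B then 1 else 0 := by
  simp [ind]

lemma mem_faceIdeal_mono {A' : Finset (Fin n)} {f : MvPowerSeries (Fin n) K}
    (h : f ∈ faceIdeal K A') : ∀ d, coeff (R := K) d f ≠ 0 → ∃ i ∈ A', d i ≠ 0 := by
  have hE : ∀ a b : Fin n →₀ ℕ, (∃ i ∈ A', a i ≠ 0) → ∃ i ∈ A', (a + b) i ≠ 0 := by
    rintro a b ⟨i, hi, hai⟩
    exact ⟨i, hi, by simp only [Finsupp.add_apply]; omega⟩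
  have hle : faceIdeal K A' ≤ expIdeal K _ hE := by
    rw [faceIdeal, Ideal.span_le]
    rintro _ ⟨i, hi, rfl⟩
    intro d hd
    classical
    rw [coeff_X] at hd
    split_ifs at hd with hds
    · exact ⟨i, hi, by rw [hds]; simp⟩
    · exact absurd rfl hd
  exact hle h

lemma monomial_ind_mem {B : Finset (Fin n)} (hB : Hits A B) :
    monomial (R := K) (ind B) 1 ∈ ⨅ j, faceIdeal K (A j) := by
  rw [Ideal.mem_iInf]
  intro j
  obtain ⟨i, hiA, hiB⟩ := hB j
  have hle : Finsupp.single i 1 ≤ ind B := by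
    rw [Finsupp.single_le_iff, ind_apply, if_pos hiB]
  have : monomial (R := K) (ind B) 1
      = X i * monomial (R := K) (ind B - Finsupp.single i 1) 1 := by
    rw [X_def, monomial_mul_monomial, one_mul, add_tsub_cancel_of_le hle]
  rw [this]
  exact Ideal.mul_mem_right _ _ (Ideal.subset_span ⟨i, hiA, rfl⟩)

/-- Characterization of membership in the Frobenius power of the intersection of
face ideals. -/
lemma mem_frobeniusPower_iff (e : ℕ) (f : MvPowerSeries (Fin n) K) :
    f ∈ frobeniusPower (⨅ j, faceIdeal K (A j)) (p ^ e) ↔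
      ∀ d, coeff (R := K) d f ≠ 0 → ∀ j, ∃ i ∈ A j, p ^ e ≤ d i := by
  classical
  constructor
  · intro hf
    have hE : ∀ a b : Fin n →₀ ℕ, (∀ j, ∃ i ∈ A j, p ^ e ≤ a i) →
        ∀ j, ∃ i ∈ A j, p ^ e ≤ (a + b) i := by
      intro a b ha j
      obtain ⟨i, hi, hai⟩ := ha j
      exact ⟨i, hi, by simp only [Finsupp.add_apply]; omega⟩
    have hle : frobeniusPower (⨅ j, faceIdeal K (A j)) (p ^ e) ≤ expIdeal K _ hE := by
      rw [frobeniusPower, Ideal.span_le]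
      rintro _ ⟨g, hg, rfl⟩
      intro d hd j
      obtain ⟨d', rfl, hne⟩ := coeff_pow_q p hd
      have hgj : g ∈ faceIdeal K (A j) := Ideal.mem_iInf.mp hg j
      obtain ⟨i, hi, hdi⟩ := mem_faceIdeal_mono hgj d' hne
      refine ⟨i, hi, ?_⟩
      have h1 : (p ^ e • d') i = p ^ e * d' i := by simp
      rw [h1]
      have h2 : 1 ≤ d' i := Nat.one_le_iff_ne_zero.mpr hdi
      calc p ^ e = p ^ e * 1 := (mul_one _).symm
        _ ≤ p ^ e * d' i := Nat.mul_le_mul_left _ h2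
    exact hle hf
  · intro hf
    set q := p ^ e with hq
    set Bset : (Fin n →₀ ℕ) → Finset (Fin n) := fun d => Finset.univ.filter (fun i => q ≤ d i)
      with hBset
    set piece : Finset (Fin n) → MvPowerSeries (Fin n) K :=
      fun T => (fun d => if Bset d = T then coeff (R := K) d f else 0 : (Fin n →₀ ℕ) → K)
      with hpiece
    have hcoeff : ∀ T d, coeff (R := K) d (piece T) = if Bset d = T then coeff (R := K) d f else 0 :=
      fun T d => rfl
    have hdecomp : f = ∑ T ∈ Finset.univ.powerset, piece T := by
      ext d
      rw [map_sum]
      simp_rw [hcoeff]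
      rw [Finset.sum_ite_eq _ (Bset d) (fun _ => coeff (R := K) d f)]
      rw [if_pos (Finset.mem_powerset.mpr (Finset.subset_univ _))]
    rw [hdecomp]
    refine Ideal.sum_mem _ fun T _ => ?_
    by_cases hT0 : piece T = 0
    · rw [hT0]; exact Ideal.zero_mem _
    obtain ⟨d₀, hd₀⟩ : ∃ d₀, coeff (R := K) d₀ (piece T) ≠ 0 := by
      by_contra hco
      push_neg at hco
      exact hT0 (MvPowerSeries.ext fun d => by rw [hco d, map_zero])
    rw [hcoeff] at hd₀
    split_ifs at hd₀ with hBT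
    · -- T = Bset d₀ is a hitting set
      have hHits : Hits A T := by
        intro j
        obtain ⟨i, hi, hqi⟩ := hf d₀ hd₀ j
        refine ⟨i, hi, ?_⟩
        rw [← hBT, hBset]
        simp only [Finset.mem_filter]
        exact ⟨Finset.mem_univ i, hqi⟩
      -- every monomial of piece T is divisible by q • ind T
      have hdiv : ∀ d, coeff (R := K) d (piece T) ≠ 0 → q • ind T ≤ d := by
        intro d hd
        rw [hcoeff] at hd
        split_ifs at hd with hBT'
        · rw [Finsupp.le_def]
          intro i
          have h1 : (q • ind T) i = q * (if i ∈ T then 1 else 0) := by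
            rw [Finsupp.smul_apply, ind_apply, smul_eq_mul]
          rw [h1]
          by_cases hiT : i ∈ T
          · rw [if_pos hiT, mul_one]
            have h3 : i ∈ Bset d := hBT' ▸ hiT
            rw [hBset] at h3
            simp only [Finset.mem_filter] at h3
            exact h3.2
          · rw [if_neg hiT, mul_zero]; exact Nat.zero_le _
        · exact absurd rfl hd
      obtain ⟨g, hg⟩ := exists_eq_monomial_mul (q • ind T) (piece T) hdiv
      have hmon : monomial (R := K) (q • ind T) (1 : K) = (monomial (R := K) (ind T) 1) ^ q := by
        rw [monomial_pow, one_pow]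
      have hgen : (monomial (R := K) (ind T) (1 : K)) ^ q
          ∈ frobeniusPower (⨅ j, faceIdeal K (A j)) q :=
        Ideal.subset_span ⟨monomial (R := K) (ind T) 1, monomial_ind_mem A hHits, rfl⟩
      rw [hg, hmon]
      exact Ideal.mul_mem_right _ _ hgen
    · exact absurd rfl hd₀

/-- Characterization of the colon membership. -/
lemma mem_colon_iff (e : ℕ) (dm : Fin n →₀ ℕ) :
    monomial (R := K) dm 1 ∈ Submodule.colon (frobeniusPower (⨅ j, faceIdeal K (A j)) (p ^ e))
        (⨅ j, faceIdeal K (A j)) ↔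
      ∀ B : Finset (Fin n), Hits A B → ∀ j, ∃ i ∈ A j,
        p ^ e ≤ dm i + (if i ∈ B then 1 else 0) := by
  classical
  rw [Submodule.mem_colon]
  constructor
  · intro h B hB j
    have hfm := h _ (Set.mem_iInter.mpr (Ideal.mem_iInf.mp (monomial_ind_mem (K := K) A hB)))
    rw [smul_eq_mul, monomial_mul_monomial, mul_one] at hfm
    rw [mem_frobeniusPower_iff] at hfm
    obtain ⟨i, hi, hqi⟩ := hfm (dm + ind B) (by rw [coeff_monomial_same]; exact one_ne_zero) j
    refine ⟨i, hi, ?_⟩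
    rw [Finsupp.add_apply, ind_apply] at hqi
    exact hqi
  · intro h f hf
    rw [smul_eq_mul, mem_frobeniusPower_iff]
    intro d hd j
    rw [coeff_monomial_mul] at hd
    split_ifs at hd with hdm
    · rw [one_mul] at hd
      set d' := d - dm with hd'
      set B := d'.support with hBdef
      have hB : Hits A B := by
        intro j'
        obtain ⟨i, hi, hdi⟩ := mem_faceIdeal_mono (Set.mem_iInter.mp hf j') d' hd
        exact ⟨i, hi, Finsupp.mem_support_iff.mpr hdi⟩
      obtain ⟨i, hi, hqi⟩ := h B hB j
      refine ⟨i, hi, ?_⟩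
      have hdeq : d i = dm i + d' i := by
        conv_lhs => rw [← add_tsub_cancel_of_le hdm]
        rfl
      have hle : (if i ∈ B then 1 else 0) ≤ d' i := by
        split_ifs with hiB
        · exact Nat.one_le_iff_ne_zero.mpr (Finsupp.mem_support_iff.mp hiB)
        · exact Nat.zero_le _
      omega
    · exact absurd rfl hd

lemma fin3 : ∀ x : Fin 3, x = 0 ∨ x = 1 ∨ x = 2 := by decide

lemma prod_X_pow_eq (d : Fin n → ℕ) :
    (∏ i, (X i : MvPowerSeries (Fin n) K) ^ d i)
      = monomial (R := K) (Finsupp.equivFunOnFinite.symm d) 1 := by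
  classical
  have h1 : ∀ i : Fin n, (X i : MvPowerSeries (Fin n) K) ^ d i
      = monomial (R := K) (Finsupp.single i (d i)) 1 := fun i => X_pow_eq i (d i)
  simp_rw [h1]
  have h2 : ∀ (T : Finset (Fin n)),
      (∏ i ∈ T, monomial (R := K) (Finsupp.single i (d i)) (1 : K))
        = monomial (R := K) (∑ i ∈ T, Finsupp.single i (d i)) 1 := by
    intro T
    induction T using Finset.induction with
    | empty => simp [monomial_zero_one]
    | insert _ _ hx ih =>
        rw [Finset.prod_insert hx, Finset.sum_insert hx, ih, monomial_mul_monomial, one_mul]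
  have h3 : (∑ i : Fin n, Finsupp.single i (d i)) = Finsupp.equivFunOnFinite.symm d := by
    ext j
    rw [Finsupp.finset_sum_apply]
    simp [Finsupp.single_apply]
  rw [h2, h3]

/-- The q-independent combinatorial criterion. -/
lemma crit_iff (e : ℕ) (he : 1 ≤ e) (σ : Fin n → Fin 3) :
    (∀ B : Finset (Fin n), Hits A B → ∀ j, ∃ i ∈ A j,
        p ^ e ≤ (Finsupp.equivFunOnFinite.symm (sigmaExp σ (p ^ e))) i
          + (if i ∈ B then 1 else 0)) ↔
      (∀ B : Finset (Fin n), Hits A B → ∀ j, ∃ i ∈ A j,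
        σ i = 2 ∨ (σ i = 1 ∧ i ∈ B)) := by
  have hq2 : 2 ≤ p ^ e := by
    have hp2 := (Fact.out : p.Prime).two_le
    calc 2 ≤ p := hp2
      _ = p ^ 1 := (pow_one p).symm
      _ ≤ p ^ e := Nat.pow_le_pow_right (by omega) he
  have key : ∀ (i : Fin n) (B : Finset (Fin n)),
      (p ^ e ≤ (Finsupp.equivFunOnFinite.symm (sigmaExp σ (p ^ e))) i
          + (if i ∈ B then 1 else 0)) ↔ (σ i = 2 ∨ (σ i = 1 ∧ i ∈ B)) := by
    intro i B
    have happ : (Finsupp.equivFunOnFinite.symm (sigmaExp σ (p ^ e))) i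
        = sigmaExp σ (p ^ e) i := by simp
    rw [happ]
    rcases fin3 (σ i) with h0 | h1 | h2
    · have hv : sigmaExp σ (p ^ e) i = 0 := by
        show (if σ i = 0 then 0 else if σ i = 1 then p ^ e - 1 else p ^ e) = 0
        rw [if_pos h0]
      rw [hv]
      constructor
      · intro hle
        exfalso
        split_ifs at hle <;> omega
      · rintro (hc | ⟨hc, -⟩)
        · rw [h0] at hc; exact absurd hc (by decide)
        · rw [h0] at hc; exact absurd hc (by decide)
    · have hv : sigmaExp σ (p ^ e) i = p ^ e - 1 := by
        show (if σ i = 0 then 0 else if σ i = 1 then p ^ e - 1 else p ^ e) = p ^ e - 1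
        rw [h1, if_neg (by decide : ¬(1 : Fin 3) = 0), if_pos rfl]
      rw [hv]
      constructor
      · intro hle
        by_cases hiB : i ∈ B
        · exact Or.inr ⟨h1, hiB⟩
        · rw [if_neg hiB] at hle; omega
      · rintro (hc | ⟨-, hiB⟩)
        · rw [h1] at hc; exact absurd hc (by decide)
        · rw [if_pos hiB]; omega
    · have hv : sigmaExp σ (p ^ e) i = p ^ e := by
        show (if σ i = 0 then 0 else if σ i = 1 then p ^ e - 1 else p ^ e) = p ^ e
        rw [h2, if_neg (by decide : ¬(2 : Fin 3) = 0), if_neg (by decide : ¬(2 : Fin 3) = 1)]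
      rw [hv]
      constructor
      · intro _; exact Or.inl h2
      · intro _; exact Nat.le_add_right _ _
  constructor
  · intro h B hB j
    obtain ⟨i, hi, hle⟩ := h B hB j
    exact ⟨i, hi, (key i B).mp hle⟩
  · intro h B hB j
    obtain ⟨i, hi, hc⟩ := h B hB j
    exact ⟨i, hi, (key i B).mpr hc⟩

end FrobAux

theorem mem_colon_frobeniusPower_iff_of_sigma {K : Type*} [Field K] (p : ℕ)
    [Fact p.Prime] [CharP K p] {n : ℕ} (s : ℕ) (hs : 0 < s)
    (A : Fin s → Finset (Fin n)) (hA : ∀ i, (A i).Nonempty)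
    (hmin : ∀ i j, i ≠ j → ¬ A i ⊆ A j) (σ : Fin n → Fin 3)
    (e e' : ℕ) (he : 1 ≤ e) (he' : 1 ≤ e') :
    (∏ i, (X i : MvPowerSeries (Fin n) K) ^ sigmaExp σ (p ^ e) i) ∈
        Submodule.colon (frobeniusPower (⨅ i, faceIdeal K (A i)) (p ^ e))
          (⨅ i, faceIdeal K (A i)) ↔
      (∏ i, (X i : MvPowerSeries (Fin n) K) ^ sigmaExp σ (p ^ e') i) ∈
        Submodule.colon (frobeniusPower (⨅ i, faceIdeal K (A i)) (p ^ e'))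
          (⨅ i, faceIdeal K (A i)) := by
  rw [FrobAux.prod_X_pow_eq, FrobAux.prod_X_pow_eq,
    FrobAux.mem_colon_iff p A e, FrobAux.mem_colon_iff p A e',
    FrobAux.crit_iff p A e he σ, FrobAux.crit_iff p A e' he' σ]
end

section
/- Assume n ≥ 3. Fix a function σ : {1,…,n} → {zero, top−1, top} with σ(1) = top, σ(2) = top−1 and σ(3) = zero, and for a power b of p let m_b(σ) denote the monomial whose i-th exponent is 0, b−1, or b according as σ(i) = zero, top−1, or top. Then for every e ≥ 1, every s ≥ 2, and all positive integers β_1, …, β_s with β_1 + ⋯ + β_s = e, the monomial m_{p^e}(σ) does NOT belong to the principal ideal of S generated by the product ∏_{j=1}^s (m_{p^{β_j}}(σ))^{p^{β_1+⋯+β_{j-1}}}; indeed the exponent of x_1 in this product, namely ∑_{j=1}^s p^{β_1+⋯+β_j}, is strictly greater than p^e. (This is the key computation showing, via Katzman's criterion, that the Frobenius algebra of the injective hull is infinitely generated in the corresponding cases.) -/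
open MvPowerSeries

section aux
variable {n : ℕ} {K : Type*} [Field K]

lemma aux_prod_X_pow (k : Fin n → ℕ) :
    (∏ i, (X i : MvPowerSeries (Fin n) K) ^ k i) =
      monomial (R := K) (∑ i, Finsupp.single i (k i)) 1 := by
  classical
  induction (Finset.univ : Finset (Fin n)) using Finset.induction with
  | empty => simp [monomial_zero_one]
  | insert _ _ h ih =>
      rw [Finset.prod_insert h, Finset.sum_insert h, ih, X_pow_eq,
        monomial_mul_monomial, one_mul]

lemma aux_monomial_one_pow (d : Fin n →₀ ℕ) (c : ℕ) :
    (monomial (R := K) d 1) ^ c = monomial (R := K) (c • d) 1 := by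
  induction c with
  | zero => simp [monomial_zero_one]
  | succ c ih => rw [pow_succ, ih, monomial_mul_monomial, one_mul, succ_nsmul]

lemma aux_prod_monomial {ι : Type*} (S : Finset ι) (d : ι → (Fin n →₀ ℕ)) :
    (∏ j ∈ S, monomial (R := K) (d j) 1) = monomial (R := K) (∑ j ∈ S, d j) 1 := by
  classical
  induction S using Finset.induction with
  | empty => simp [monomial_zero_one]
  | insert _ _ h ih =>
      rw [Finset.prod_insert h, Finset.sum_insert h, ih, monomial_mul_monomial, one_mul]

lemma aux_sum_single_apply (k : Fin n → ℕ) (j : Fin n) :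
    (∑ i, Finsupp.single i (k i)) j = k j := by
  classical
  rw [Finsupp.finset_sum_apply]
  simp [Finsupp.single_apply]

end aux

theorem katzman_key_computation {K : Type*} [Field K] (p : ℕ) [Fact p.Prime] [CharP K p]
    {n : ℕ} (hn : 3 ≤ n) (σ : Fin n → Fin 3)
    (h1 : σ ⟨0, by omega⟩ = 2) (h2 : σ ⟨1, by omega⟩ = 1) (h3 : σ ⟨2, by omega⟩ = 0)
    (e s : ℕ) (he : 1 ≤ e) (hs : 2 ≤ s) (β : Fin s → ℕ) (hβ : ∀ j, 0 < β j)
    (hsum : ∑ j, β j = e) :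
    (∏ i, (X i : MvPowerSeries (Fin n) K) ^ sigmaExp σ (p ^ e) i) ∉
        Ideal.span {∏ j : Fin s,
          (∏ i, (X i : MvPowerSeries (Fin n) K) ^ sigmaExp σ (p ^ β j) i) ^
            (p ^ (∑ j' ∈ Finset.Iio j, β j'))} ∧
      p ^ e < ∑ j : Fin s, p ^ (∑ j' ∈ Finset.Iic j, β j') := by
  classical
  have hp : p.Prime := Fact.out
  have hppos : 0 < p := hp.pos
  set i₀ : Fin n := ⟨0, by omega⟩
  -- the key inequality
  have hlastIic : (Finset.Iic (⟨s - 1, by omega⟩ : Fin s)) = Finset.univ := by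
    ext j
    simp only [Finset.mem_Iic, Finset.mem_univ, iff_true, Fin.le_def]
    have := j.isLt
    omega
  have hlast : ∑ j' ∈ Finset.Iic (⟨s - 1, by omega⟩ : Fin s), β j' = e := by
    rw [hlastIic, hsum]
  have hne : (⟨0, by omega⟩ : Fin s) ≠ ⟨s - 1, by omega⟩ := by
    intro h
    rw [Fin.mk.injEq] at h
    omega
  have hineq : p ^ e < ∑ j : Fin s, p ^ (∑ j' ∈ Finset.Iic j, β j') := by
    have hsub : ({⟨0, by omega⟩, ⟨s - 1, by omega⟩} : Finset (Fin s)) ⊆ Finset.univ :=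
      Finset.subset_univ _
    have h := Finset.sum_le_sum_of_subset (f := fun j => p ^ (∑ j' ∈ Finset.Iic j, β j')) hsub
    rw [Finset.sum_pair hne] at h
    beta_reduce at h
    rw [hlast] at h
    have h1' : 1 ≤ p ^ (∑ j' ∈ Finset.Iic (⟨0, by omega⟩ : Fin s), β j') :=
      Nat.one_le_pow _ _ hppos
    omega
  refine ⟨?_, hineq⟩
  -- rewrite both sides as monomials
  have hIic : ∀ j : Fin s, (∑ j' ∈ Finset.Iio j, β j') + β j = ∑ j' ∈ Finset.Iic j, β j' := by
    intro j
    rw [← Finset.Iio_insert, Finset.sum_insert (by simp)]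
    omega
  obtain ⟨D, hD⟩ : ∃ D : Fin n →₀ ℕ, D = ∑ i, Finsupp.single i (sigmaExp σ (p ^ e) i) :=
    ⟨_, rfl⟩
  obtain ⟨E, hE⟩ : ∃ E : Fin n →₀ ℕ, E =
      ∑ j : Fin s, p ^ (∑ j' ∈ Finset.Iio j, β j') •
        (∑ i, Finsupp.single i (sigmaExp σ (p ^ β j) i)) := ⟨_, rfl⟩
  have hgen : (∏ j : Fin s,
      (∏ i, (X i : MvPowerSeries (Fin n) K) ^ sigmaExp σ (p ^ β j) i) ^
        (p ^ (∑ j' ∈ Finset.Iio j, β j'))) = monomial (R := K) E 1 := by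
    rw [hE, ← aux_prod_monomial]
    apply Finset.prod_congr rfl
    intro j _
    rw [aux_prod_X_pow, aux_monomial_one_pow]
  have hm : (∏ i, (X i : MvPowerSeries (Fin n) K) ^ sigmaExp σ (p ^ e) i) = monomial (R := K) D 1 := by
    rw [hD]; exact aux_prod_X_pow _
  -- exponents at index i₀
  have hσ0 : sigmaExp σ (p ^ e) i₀ = p ^ e := by
    simp [sigmaExp, h1]
  have hD0 : D i₀ = p ^ e := by
    rw [hD, aux_sum_single_apply, hσ0]
  have hE0 : E i₀ = ∑ j : Fin s, p ^ (∑ j' ∈ Finset.Iic j, β j') := by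
    rw [hE, Finsupp.finset_sum_apply]
    apply Finset.sum_congr rfl
    intro j _
    rw [Finsupp.smul_apply, aux_sum_single_apply]
    have : sigmaExp σ (p ^ β j) i₀ = p ^ β j := by simp [sigmaExp, h1]
    rw [this, smul_eq_mul, ← pow_add, hIic j]
  -- conclude
  rw [hm, hgen]
  intro hmem
  obtain ⟨f, hf⟩ := Ideal.mem_span_singleton'.mp hmem
  have hcoeff := congrArg (coeff (R := K) D) hf
  rw [coeff_mul_monomial, coeff_monomial_same] at hcoeff
  have hnle : ¬ E ≤ D := by
    intro hle
    have := Finsupp.le_def.mp hle i₀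
    rw [hD0, hE0] at this
    omega
  rw [if_neg hnle] at hcoeff
  exact one_ne_zero hcoeff.symm
end

section
/- Let n ≥ 2, s ≥ 2, and let I = I_{α_1} ∩ ⋯ ∩ I_{α_s} be the minimal primary decomposition of a squarefree monomial ideal I ⊆ S in which every component has pure height n−1, i.e. each α_i ∈ {0,1}^n has |supp₊(α_i)| = n−1 and the α_i are pairwise distinct. Then (I^{[q]} :_S I) = I^{[q]} + ((x_1⋯x_n)^{q-1}) for every q = p^e, e ≥ 1. (Hence the Frobenius algebra of the injective hull of the residue field of S/I is principally generated.) -/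
open MvPowerSeries

namespace FrobAux

variable {K : Type*} [Field K] {n : ℕ}

/-- The monomial ideal generated by the monomials with exponents in `M`. -/
noncomputable def mI (K : Type*) [Field K] {n : ℕ} (M : Finset (Fin n →₀ ℕ)) :
    Ideal (MvPowerSeries (Fin n) K) :=
  Ideal.span ((fun d => (monomial d (1 : K) : MvPowerSeries (Fin n) K)) ''
    (M : Set (Fin n →₀ ℕ)))

theorem mI_mono {M M' : Finset (Fin n →₀ ℕ)} (h : M ⊆ M') : mI K M ≤ mI K M' :=
  Ideal.span_mono (Set.image_mono (by exact_mod_cast h))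

theorem mem_mI_of {M : Finset (Fin n →₀ ℕ)} :
    ∀ f : MvPowerSeries (Fin n) K, (∀ e, coeff e f ≠ 0 → ∃ d ∈ M, d ≤ e) → f ∈ mI K M := by
  classical
  induction M using Finset.induction_on with
  | empty =>
    intro f hf
    have : f = 0 := by
      apply MvPowerSeries.ext
      intro d
      rw [map_zero]
      by_contra he
      obtain ⟨d', hd', -⟩ := hf d he
      exact absurd hd' (Finset.notMem_empty d')
    rw [this]; exact Ideal.zero_mem _
  | @insert d M hdM ih =>
    intro f hf
    set g : MvPowerSeries (Fin n) K := fun e => coeff (e + d) f with hg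
    have hcg : ∀ e, coeff e g = coeff (e + d) f := fun e => rfl
    have h1 : ∀ e, coeff e ((monomial d 1 : MvPowerSeries (Fin n) K) * g)
        = if d ≤ e then coeff e f else 0 := by
      intro e
      rw [coeff_monomial_mul]
      split_ifs with h
      · rw [one_mul, hcg, tsub_add_cancel_of_le h]
      · rfl
    have h2 : f - monomial d 1 * g ∈ mI K M := by
      apply ih
      intro e he
      rw [map_sub, h1] at he
      split_ifs at he with h
      · simp at he
      · rw [sub_zero] at he
        obtain ⟨d', hd', hle⟩ := hf e he
        rcases Finset.mem_insert.mp hd' with rfl | hmem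
        · exact absurd hle h
        · exact ⟨d', hmem, hle⟩
    have h3 : (monomial d 1 : MvPowerSeries (Fin n) K) * g ∈ mI K (insert d M) :=
      Ideal.mul_mem_right _ _ (Ideal.subset_span ⟨d, by simp, rfl⟩)
    have h4 := Ideal.add_mem _ h3 (mI_mono (Finset.subset_insert d M) h2)
    rwa [add_sub_cancel] at h4

theorem mem_mI {M : Finset (Fin n →₀ ℕ)} {f : MvPowerSeries (Fin n) K} :
    f ∈ mI K M ↔ ∀ e, coeff e f ≠ 0 → ∃ d ∈ M, d ≤ e := by
  classical
  constructor
  · intro hf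
    refine Submodule.span_induction ?_ ?_ ?_ ?_ hf
    · rintro g ⟨d, hd, rfl⟩ e he
      rw [coeff_monomial] at he
      split_ifs at he with h
      · exact ⟨d, by exact_mod_cast hd, h.ge⟩
      · exact absurd rfl he
    · intro e he
      rw [map_zero] at he
      exact absurd rfl he
    · intro x y _ _ hx hy e he
      rw [map_add] at he
      rcases (by by_contra hc; push_neg at hc; rw [hc.1, hc.2, add_zero] at he; exact he rfl :
        coeff e x ≠ 0 ∨ coeff e y ≠ 0) with h | h
      · exact hx e h
      · exact hy e h
    · intro a x _ hx e he
      rw [smul_eq_mul, MvPowerSeries.coeff_mul] at he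
      obtain ⟨pq, hpq, hne⟩ := Finset.exists_ne_zero_of_sum_ne_zero he
      obtain ⟨d, hd, hle⟩ := hx pq.2 (right_ne_zero_of_mul hne)
      refine ⟨d, hd, hle.trans ?_⟩
      rw [← Finset.HasAntidiagonal.mem_antidiagonal.mp hpq]
      exact le_add_self
  · exact mem_mI_of f

theorem frobeniusPower_span' {R : Type*} [CommRing R] (p : ℕ) [Fact p.Prime] [CharP R p]
    (e : ℕ) (T : Set R) :
    Ideal.span ((fun f => f ^ p ^ e) '' ((Ideal.span T : Ideal R) : Set R)) =
      Ideal.span ((fun f => f ^ p ^ e) '' T) := by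
  have hfe : (fun f : R => f ^ p ^ e) = ⇑(iterateFrobenius R p e) := by
    funext x; rw [iterateFrobenius_def]
  rw [hfe]
  have h1 : Ideal.span (⇑(iterateFrobenius R p e) '' ((Ideal.span T : Ideal R) : Set R))
      = Ideal.map (iterateFrobenius R p e) (Ideal.span T) := rfl
  rw [h1, Ideal.map_span]

theorem monomial_one_pow (d : Fin n →₀ ℕ) (m : ℕ) :
    (monomial d (1 : K)) ^ m = monomial (m • d) 1 := by
  induction m with
  | zero => simp
  | succ m ih => rw [pow_succ, ih, monomial_mul_monomial, one_mul, succ_nsmul]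

theorem frobeniusPower_mI (p : ℕ) [Fact p.Prime] [CharP K p] (e : ℕ)
    (M : Finset (Fin n →₀ ℕ)) :
    frobeniusPower (mI K M) (p ^ e) = mI K (M.image fun d => p ^ e • d) := by
  haveI : CharP (MvPowerSeries (Fin n) K) p := charP_of_injective_algebraMap' K p
  have h0 : frobeniusPower (mI K M) (p ^ e)
      = Ideal.span ((fun f => f ^ p ^ e) '' ((mI K M : Ideal (MvPowerSeries (Fin n) K)) :
        Set (MvPowerSeries (Fin n) K))) := rfl
  rw [h0]
  unfold mI
  rw [frobeniusPower_span' p e]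
  congr 1
  rw [Set.image_image, Finset.coe_image, Set.image_image]
  exact Set.image_congr fun d _ => monomial_one_pow d (p ^ e)

theorem prod_monomial (t : Finset (Fin n)) (d : Fin n → (Fin n →₀ ℕ)) :
    (∏ i ∈ t, (monomial (d i) (1 : K) : MvPowerSeries (Fin n) K))
      = monomial (∑ i ∈ t, d i) 1 := by
  classical
  induction t using Finset.induction_on with
  | empty => simp
  | @insert a t ha ih =>
    rw [Finset.prod_insert ha, Finset.sum_insert ha, ih, monomial_mul_monomial, one_mul]

theorem prod_X_pow (m : ℕ) :
    (∏ i : Fin n, (X i : MvPowerSeries (Fin n) K)) ^ m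
      = monomial (∑ i : Fin n, Finsupp.single i m) 1 := by
  have h1 : (∏ i : Fin n, (X i : MvPowerSeries (Fin n) K))
      = monomial (∑ i : Fin n, Finsupp.single i 1) 1 := by
    rw [← prod_monomial]
    exact Finset.prod_congr rfl fun i _ => X_def i
  rw [h1, monomial_one_pow]
  have h2 : m • (∑ i : Fin n, Finsupp.single i (1 : ℕ)) = ∑ i : Fin n, Finsupp.single i m := by
    rw [Finset.smul_sum]
    exact Finset.sum_congr rfl fun i _ => by rw [Finsupp.smul_single, smul_eq_mul, mul_one]
  rw [h2]

theorem pair_le {N : ℕ} (a b : Fin N) (m : ℕ) (e : Fin N →₀ ℕ) (hab : a ≠ b) :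
    Finsupp.single a m + Finsupp.single b m ≤ e ↔ m ≤ e a ∧ m ≤ e b := by
  simp only [Finsupp.le_def, Finsupp.add_apply, Finsupp.single_apply]
  constructor
  · intro h
    constructor
    · have := h a
      rw [if_pos rfl, if_neg (Ne.symm hab)] at this
      omega
    · have := h b
      rw [if_neg hab, if_pos rfl] at this
      omega
  · rintro ⟨h1, h2⟩ k
    by_cases hka : a = k
    · subst hka
      rw [if_pos rfl, if_neg (Ne.symm hab)]
      omega
    · rw [if_neg hka]
      by_cases hkb : b = k
      · subst hkb; rw [if_pos rfl]; omega
      · rw [if_neg hkb]; omega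

theorem faceIdeal_eq' (B : Finset (Fin n)) :
    Ideal.span ((fun i => (X i : MvPowerSeries (Fin n) K)) '' (B : Set (Fin n)))
      = mI K (B.image fun j => Finsupp.single j 1) := by
  unfold mI
  congr 1
  rw [Finset.coe_image, Set.image_image]
  exact Set.image_congr fun j _ => X_def j

theorem mem_faceIdeal {B : Finset (Fin n)} {f : MvPowerSeries (Fin n) K} :
    f ∈ faceIdeal K B ↔ ∀ e, coeff e f ≠ 0 → ∃ j, j ∈ B ∧ 1 ≤ e j := by
  have h0 : faceIdeal K B = mI K (B.image fun j => Finsupp.single j 1) := faceIdeal_eq' B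
  rw [h0, mem_mI]
  constructor
  · intro h e' he'
    obtain ⟨d, hd, hle⟩ := h e' he'
    obtain ⟨j, hj, rfl⟩ := Finset.mem_image.mp hd
    exact ⟨j, hj, Finsupp.single_le_iff.mp hle⟩
  · intro h e' he'
    obtain ⟨j, hj, hje⟩ := h e' he'
    exact ⟨Finsupp.single j 1, Finset.mem_image_of_mem _ hj, Finsupp.single_le_iff.mpr hje⟩

theorem core {N : ℕ} (q : ℕ) (C : Finset (Fin N)) (hC : 1 < C.card) (g : Fin N → ℕ)
    (hQ : ¬ ((∃ j, j ∉ C ∧ q ≤ g j) ∨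
      ∃ a b, a ∈ C ∧ b ∈ C ∧ a ≠ b ∧ q ≤ g a ∧ q ≤ g b))
    (H1 : ∀ j, j ∉ C →
      ((∃ j', j' ∉ C ∧ q ≤ g j' + (if j = j' then 1 else 0)) ∨
        ∃ a b, a ∈ C ∧ b ∈ C ∧ a ≠ b ∧ q ≤ g a + (if j = a then 1 else 0) ∧
          q ≤ g b + (if j = b then 1 else 0)))
    (H2 : ∀ k t, k ∈ C → t ∈ C → k ≠ t →
      ((∃ j', j' ∉ C ∧ q ≤ g j' + ((if k = j' then 1 else 0) + (if t = j' then 1 else 0))) ∨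
        ∃ a b, a ∈ C ∧ b ∈ C ∧ a ≠ b ∧
          q ≤ g a + ((if k = a then 1 else 0) + (if t = a then 1 else 0)) ∧
          q ≤ g b + ((if k = b then 1 else 0) + (if t = b then 1 else 0)))) :
    ∀ k, q - 1 ≤ g k := by
  push_neg at hQ
  obtain ⟨hQ1, hQ2⟩ := hQ
  intro k
  by_cases hk : k ∈ C
  · by_cases hA : ∃ t, t ∈ C ∧ t ≠ k ∧ q ≤ g t
    · obtain ⟨t, htC, htk, hqt⟩ := hA
      rcases H2 k t hk htC (Ne.symm htk) with ⟨j', hj', hle⟩ | ⟨a, b, ha, hb, hab, h1, h2⟩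
      · rw [if_neg (fun h : k = j' => hj' (h ▸ hk)),
          if_neg (fun h : t = j' => hj' (h ▸ htC))] at hle
        have := hQ1 j' hj'
        omega
      · by_cases hak : a = k
        · subst hak
          rw [if_pos rfl, if_neg (fun h : t = a => htk h)] at h1
          omega
        · by_cases hbk : b = k
          · subst hbk
            rw [if_pos rfl, if_neg (fun h : t = b => htk h)] at h2
            omega
          · by_cases hat : a = t
            · have hqb : q ≤ g b := by
                rw [if_neg (fun h : k = b => hbk h.symm),
                  if_neg (fun h : t = b => hab (hat.trans h))] at h2
                omega
              have := hQ2 b t hb htC (fun h : b = t => hab (hat.trans h.symm)) hqb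
              omega
            · have hqa : q ≤ g a := by
                rw [if_neg (fun h : k = a => hak h.symm),
                  if_neg (fun h : t = a => hat h.symm)] at h1
                omega
              have := hQ2 a t ha htC hat hqa
              omega
    · push_neg at hA
      obtain ⟨b, hbC, hbk⟩ := Finset.exists_mem_ne hC k
      rcases H2 k b hk hbC (Ne.symm hbk) with ⟨j', hj', hle⟩ | ⟨a, b', ha, hb', hab, h1, h2⟩
      · rw [if_neg (fun h : k = j' => hj' (h ▸ hk)),
          if_neg (fun h : b = j' => hj' (h ▸ hbC))] at hle
        have := hQ1 j' hj'
        omega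
      · by_cases hak : a = k
        · subst hak
          rw [if_pos rfl, if_neg (fun h : b = a => hbk h)] at h1
          omega
        · by_cases hbk' : b' = k
          · subst hbk'
            rw [if_pos rfl, if_neg (fun h : b = b' => hbk h)] at h2
            omega
          · by_cases hab'' : a = b
            · have hqb' : q ≤ g b' := by
                rw [if_neg (fun h : k = b' => hbk' h.symm),
                  if_neg (fun h : b = b' => hab (hab''.trans h))] at h2
                omega
              have := hA b' hb' (fun h => hbk' h)
              omega
            · have hqa : q ≤ g a := by
                rw [if_neg (fun h : k = a => hak h.symm),
                  if_neg (fun h : b = a => hab'' h.symm)] at h1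
                omega
              have := hA a ha hak
              omega
  · rcases H1 k hk with ⟨j', hj', hle⟩ | ⟨a, b, ha, hb, hab, h1, h2⟩
    · by_cases hkj : k = j'
      · subst hkj
        rw [if_pos rfl] at hle
        omega
      · rw [if_neg hkj] at hle
        have := hQ1 j' hj'
        omega
    · have h1' : q ≤ g a := by
        rw [if_neg (fun h : k = a => hk (h ▸ ha))] at h1
        omega
      have h2' : q ≤ g b := by
        rw [if_neg (fun h : k = b => hk (h ▸ hb))] at h2
        omega
      have := hQ2 a b ha hb hab h1'
      omega

end FrobAux

theorem colon_frobeniusPower_pure_height_n_sub_one {K : Type*} [Field K] (p : ℕ)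
    [Fact p.Prime] [CharP K p] (e : ℕ) (he : 1 ≤ e) {n : ℕ} (hn : 2 ≤ n)
    (s : ℕ) (hs : 2 ≤ s) (A : Fin s → Finset (Fin n))
    (hcard : ∀ i, (A i).card = n - 1) (hinj : Function.Injective A) :
    Submodule.colon (frobeniusPower (⨅ i, faceIdeal K (A i)) (p ^ e))
        (⨅ i, faceIdeal K (A i)) =
      frobeniusPower (⨅ i, faceIdeal K (A i)) (p ^ e) ⊔
        Ideal.span {(∏ i, (X i : MvPowerSeries (Fin n) K)) ^ (p ^ e - 1)} := by
  classical
  have hq2 : 2 ≤ p ^ e := by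
    have h2p : 2 ≤ p := (Fact.out : p.Prime).two_le
    calc 2 ≤ p := h2p
      _ = p ^ 1 := (pow_one p).symm
      _ ≤ p ^ e := Nat.pow_le_pow_right (by omega) he
  -- the complements of the `A i` are singletons
  have hcompl : ∀ i, ∃ a, (A i)ᶜ = {a} := by
    intro i
    rw [← Finset.card_eq_one, Finset.card_compl, hcard i, Fintype.card_fin]
    omega
  choose c hc using hcompl
  have hAc : ∀ i, A i = {c i}ᶜ := fun i => by rw [← hc i, compl_compl]
  have hmemA : ∀ i j, j ∈ A i ↔ j ≠ c i := by
    intro i j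
    rw [hAc i, Finset.mem_compl, Finset.mem_singleton]
  have hcinj : Function.Injective c := by
    intro i j h
    apply hinj
    rw [hAc, hAc, h]
  set C : Finset (Fin n) := Finset.image c Finset.univ with hCdef
  have hmemC : ∀ j, j ∈ C ↔ ∃ i, c i = j := by
    intro j; simp [hCdef]
  have hCcard : 1 < C.card := by
    rw [hCdef, Finset.card_image_of_injective _ hcinj, Finset.card_univ, Fintype.card_fin]
    omega
  set G : Finset (Fin n →₀ ℕ) :=
    ((Finset.univ \ C).image fun j => Finsupp.single j 1) ∪
      (((C ×ˢ C).filter fun ab => ab.1 ≠ ab.2).image fun ab =>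
        Finsupp.single ab.1 1 + Finsupp.single ab.2 1) with hGdef
  have hGmem : ∀ d, d ∈ G ↔
      (∃ j, j ∉ C ∧ d = Finsupp.single j 1) ∨
        (∃ a b, a ∈ C ∧ b ∈ C ∧ a ≠ b ∧ d = Finsupp.single a 1 + Finsupp.single b 1) := by
    intro d
    simp only [hGdef, Finset.mem_union, Finset.mem_image, Finset.mem_sdiff, Finset.mem_univ,
      true_and, Finset.mem_filter, Finset.mem_product, Prod.exists]
    constructor
    · rintro (⟨j, hj, rfl⟩ | ⟨a, b, ⟨⟨ha, hb⟩, hab⟩, rfl⟩)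
      · exact Or.inl ⟨j, hj, rfl⟩
      · exact Or.inr ⟨a, b, ha, hb, hab, rfl⟩
    · rintro (⟨j, hj, rfl⟩ | ⟨a, b, ha, hb, hab, rfl⟩)
      · exact Or.inl ⟨j, hj, rfl⟩
      · exact Or.inr ⟨a, b, ⟨⟨ha, hb⟩, hab⟩, rfl⟩
  have hG01 : ∀ d ∈ G, ∀ k, d k ≤ 1 := by
    intro d hd k
    rcases (hGmem d).mp hd with ⟨j, _, rfl⟩ | ⟨a, b, _, _, hab, rfl⟩
    · rw [Finsupp.single_apply]; split <;> omega
    · rw [Finsupp.add_apply, Finsupp.single_apply, Finsupp.single_apply]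
      by_cases h1 : a = k
      · rw [if_pos h1, if_neg (fun h2 : b = k => hab (h1.trans h2.symm))]
        omega
      · rw [if_neg h1]
        split <;> omega
  -- the intersection of the face ideals is the monomial ideal on `G`
  have hI : (⨅ i, faceIdeal K (A i)) = FrobAux.mI K G := by
    ext f
    rw [FrobAux.mem_mI, Submodule.mem_iInf]
    simp only [FrobAux.mem_faceIdeal, hmemA]
    constructor
    · intro h e' he'
      by_cases hout : ∃ j, j ∉ C ∧ 1 ≤ e' j
      · obtain ⟨j, hj, hej⟩ := hout
        exact ⟨Finsupp.single j 1, (hGmem _).mpr (Or.inl ⟨j, hj, rfl⟩),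
          Finsupp.single_le_iff.mpr hej⟩
      · push_neg at hout
        obtain ⟨j0, hj0ne, hej0⟩ := h ⟨0, by omega⟩ e' he'
        have hj0C : j0 ∈ C := by
          by_contra hcon
          have := hout j0 hcon
          omega
        obtain ⟨i1, hi1⟩ := (hmemC j0).mp hj0C
        obtain ⟨j1, hj1ne, hej1⟩ := h i1 e' he'
        have hj1C : j1 ∈ C := by
          by_contra hcon
          have := hout j1 hcon
          omega
        have hne : j0 ≠ j1 := fun hh => hj1ne (hh.symm.trans hi1.symm)
        exact ⟨_, (hGmem _).mpr (Or.inr ⟨j0, j1, hj0C, hj1C, hne, rfl⟩),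
          (FrobAux.pair_le j0 j1 1 e' hne).mpr ⟨hej0, hej1⟩⟩
    · intro h i e' he'
      obtain ⟨d, hdG, hde⟩ := h e' he'
      rcases (hGmem d).mp hdG with ⟨j, hj, rfl⟩ | ⟨a, b, haC, hbC, hab, rfl⟩
      · exact ⟨j, fun hh => hj ((hmemC j).mpr ⟨i, hh.symm⟩), Finsupp.single_le_iff.mp hde⟩
      · obtain ⟨hea, heb⟩ := (FrobAux.pair_le a b 1 e' hab).mp hde
        by_cases hac : a = c i
        · exact ⟨b, fun hh => hab (hac.trans hh.symm), heb⟩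
        · exact ⟨a, hac, hea⟩
  set Gq : Finset (Fin n →₀ ℕ) := G.image fun d => p ^ e • d with hGqdef
  have hFrob : frobeniusPower (⨅ i, faceIdeal K (A i)) (p ^ e) = FrobAux.mI K Gq := by
    rw [hI, FrobAux.frobeniusPower_mI p e G]
  have hsmul_single : ∀ (j : Fin n) (m : ℕ), m • Finsupp.single j (1 : ℕ) = Finsupp.single j m :=
    fun j m => by rw [Finsupp.smul_single, smul_eq_mul, mul_one]
  have hGq_le : ∀ β : Fin n →₀ ℕ, (∃ D ∈ Gq, D ≤ β) ↔
      ((∃ j, j ∉ C ∧ p ^ e ≤ β j) ∨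
        ∃ a b, a ∈ C ∧ b ∈ C ∧ a ≠ b ∧ p ^ e ≤ β a ∧ p ^ e ≤ β b) := by
    intro β
    constructor
    · rintro ⟨D, hD, hle⟩
      obtain ⟨d, hdG, rfl⟩ := Finset.mem_image.mp hD
      rcases (hGmem d).mp hdG with ⟨j, hj, rfl⟩ | ⟨a, b, ha, hb, hab, rfl⟩
      · rw [hsmul_single] at hle
        exact Or.inl ⟨j, hj, Finsupp.single_le_iff.mp hle⟩
      · rw [smul_add, hsmul_single, hsmul_single] at hle
        obtain ⟨h1, h2⟩ := (FrobAux.pair_le a b _ β hab).mp hle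
        exact Or.inr ⟨a, b, ha, hb, hab, h1, h2⟩
    · rintro (⟨j, hj, hle⟩ | ⟨a, b, ha, hb, hab, h1, h2⟩)
      · refine ⟨p ^ e • Finsupp.single j 1,
          Finset.mem_image_of_mem _ ((hGmem _).mpr (Or.inl ⟨j, hj, rfl⟩)), ?_⟩
        rw [hsmul_single]
        exact Finsupp.single_le_iff.mpr hle
      · refine ⟨p ^ e • (Finsupp.single a 1 + Finsupp.single b 1),
          Finset.mem_image_of_mem _ ((hGmem _).mpr (Or.inr ⟨a, b, ha, hb, hab, rfl⟩)), ?_⟩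
        rw [smul_add, hsmul_single, hsmul_single]
        exact (FrobAux.pair_le a b _ β hab).mpr ⟨h1, h2⟩
  set w : Fin n →₀ ℕ := ∑ i : Fin n, Finsupp.single i (p ^ e - 1) with hwdef
  have hwk : ∀ k, w k = p ^ e - 1 := by
    intro k
    rw [hwdef, Finsupp.finset_sum_apply]
    rw [Finset.sum_eq_single k]
    · rw [Finsupp.single_apply, if_pos rfl]
    · intro b _ hbk
      rw [Finsupp.single_apply, if_neg hbk]
    · intro h
      exact absurd (Finset.mem_univ k) h
  have hprod : (∏ i, (X i : MvPowerSeries (Fin n) K)) ^ (p ^ e - 1) = monomial w 1 :=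
    FrobAux.prod_X_pow (p ^ e - 1)
  have hRHS : FrobAux.mI K Gq ⊔
      Ideal.span {(∏ i, (X i : MvPowerSeries (Fin n) K)) ^ (p ^ e - 1)}
      = FrobAux.mI K (insert w Gq) := by
    rw [hprod]
    unfold FrobAux.mI
    rw [Finset.coe_insert, Set.insert_eq, Set.image_union, Ideal.span_union, Set.image_singleton]
    exact sup_comm _ _
  have hβapp1 : ∀ (j x : Fin n) (β : Fin n →₀ ℕ),
      ((β + Finsupp.single j 1 : Fin n →₀ ℕ)) x = β x + (if j = x then 1 else 0) := by
    intro j x β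
    rw [Finsupp.add_apply, Finsupp.single_apply]
  have hβapp2 : ∀ (k t x : Fin n) (β : Fin n →₀ ℕ),
      ((β + (Finsupp.single k 1 + Finsupp.single t 1) : Fin n →₀ ℕ)) x
        = β x + ((if k = x then 1 else 0) + (if t = x then 1 else 0)) := by
    intro k t x β
    rw [Finsupp.add_apply, Finsupp.add_apply, Finsupp.single_apply, Finsupp.single_apply]
  rw [hFrob, show (⨅ i, ((faceIdeal K (A i) : Ideal (MvPowerSeries (Fin n) K)) :
      Set (MvPowerSeries (Fin n) K))) = ((⨅ i, faceIdeal K (A i) : Ideal (MvPowerSeries (Fin n) K)) :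
      Set (MvPowerSeries (Fin n) K)) by ext x; simp [Submodule.mem_iInf], hI, hRHS]
  ext r
  rw [Submodule.mem_colon, FrobAux.mem_mI]
  constructor
  · intro hr β hβ
    have H1 : ∀ j, j ∉ C →
        ((∃ j', j' ∉ C ∧ p ^ e ≤ β j' + (if j = j' then 1 else 0)) ∨
          ∃ a b, a ∈ C ∧ b ∈ C ∧ a ≠ b ∧ p ^ e ≤ β a + (if j = a then 1 else 0) ∧
            p ^ e ≤ β b + (if j = b then 1 else 0)) := by
      intro j hj
      have hmem : (monomial (Finsupp.single j 1) (1 : K) : MvPowerSeries (Fin n) K)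
          ∈ FrobAux.mI K G :=
        Ideal.subset_span ⟨Finsupp.single j 1,
          Finset.mem_coe.mpr ((hGmem _).mpr (Or.inl ⟨j, hj, rfl⟩)), rfl⟩
      have hin := hr _ hmem
      rw [smul_eq_mul] at hin
      have hco := FrobAux.mem_mI.mp hin (β + Finsupp.single j 1)
        (by rw [coeff_add_mul_monomial, mul_one]; exact hβ)
      rcases (hGq_le _).mp hco with ⟨j', hj', hle⟩ | ⟨a, b, ha, hb, hab, h1, h2⟩
      · exact Or.inl ⟨j', hj', by rw [← hβapp1 j j' β]; exact hle⟩
      · exact Or.inr ⟨a, b, ha, hb, hab, by rw [← hβapp1 j a β]; exact h1,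
          by rw [← hβapp1 j b β]; exact h2⟩
    have H2 : ∀ k t, k ∈ C → t ∈ C → k ≠ t →
        ((∃ j', j' ∉ C ∧
            p ^ e ≤ β j' + ((if k = j' then 1 else 0) + (if t = j' then 1 else 0))) ∨
          ∃ a b, a ∈ C ∧ b ∈ C ∧ a ≠ b ∧
            p ^ e ≤ β a + ((if k = a then 1 else 0) + (if t = a then 1 else 0)) ∧
            p ^ e ≤ β b + ((if k = b then 1 else 0) + (if t = b then 1 else 0))) := by
      intro k t hk ht hkt
      have hmem : (monomial (Finsupp.single k 1 + Finsupp.single t 1) (1 : K) :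
          MvPowerSeries (Fin n) K) ∈ FrobAux.mI K G :=
        Ideal.subset_span ⟨Finsupp.single k 1 + Finsupp.single t 1,
          Finset.mem_coe.mpr ((hGmem _).mpr (Or.inr ⟨k, t, hk, ht, hkt, rfl⟩)), rfl⟩
      have hin := hr _ hmem
      rw [smul_eq_mul] at hin
      have hco := FrobAux.mem_mI.mp hin (β + (Finsupp.single k 1 + Finsupp.single t 1))
        (by rw [coeff_add_mul_monomial, mul_one]; exact hβ)
      rcases (hGq_le _).mp hco with ⟨j', hj', hle⟩ | ⟨a, b, ha, hb, hab, h1, h2⟩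
      · exact Or.inl ⟨j', hj', by rw [← hβapp2 k t j' β]; exact hle⟩
      · exact Or.inr ⟨a, b, ha, hb, hab, by rw [← hβapp2 k t a β]; exact h1,
          by rw [← hβapp2 k t b β]; exact h2⟩
    by_cases hQ : (∃ j, j ∉ C ∧ p ^ e ≤ β j) ∨
        ∃ a b, a ∈ C ∧ b ∈ C ∧ a ≠ b ∧ p ^ e ≤ β a ∧ p ^ e ≤ β b
    · obtain ⟨D, hD, hle⟩ := (hGq_le β).mpr hQ
      exact ⟨D, Finset.mem_insert_of_mem hD, hle⟩
    · have hcore := FrobAux.core (p ^ e) C hCcard (⇑β) hQ H1 H2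
      refine ⟨w, Finset.mem_insert_self _ _, ?_⟩
      rw [Finsupp.le_def]
      intro k
      rw [hwk k]
      exact hcore k
  · intro hcond f hf
    rw [smul_eq_mul, mul_comm, FrobAux.mem_mI]
    intro γ hγ
    rw [MvPowerSeries.coeff_mul] at hγ
    obtain ⟨pq, hpq, hne⟩ := Finset.exists_ne_zero_of_sum_ne_zero hγ
    have hsum : pq.1 + pq.2 = γ := Finset.HasAntidiagonal.mem_antidiagonal.mp hpq
    obtain ⟨d, hdG, hdle⟩ := FrobAux.mem_mI.mp hf pq.1 (left_ne_zero_of_mul hne)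
    obtain ⟨D, hD, hDle⟩ := hcond pq.2 (right_ne_zero_of_mul hne)
    rcases Finset.mem_insert.mp hD with rfl | hDGq
    · refine ⟨p ^ e • d, Finset.mem_image_of_mem _ hdG, ?_⟩
      rw [Finsupp.le_def]
      intro k
      have hd1 : d k ≤ 1 := hG01 d hdG k
      have h5 := Finsupp.le_def.mp hdle k
      have h6 := Finsupp.le_def.mp hDle k
      rw [hwk k] at h6
      have hγk : γ k = pq.1 k + pq.2 k := by rw [← hsum, Finsupp.add_apply]
      rw [Finsupp.smul_apply, smul_eq_mul]
      have hd01 : d k = 0 ∨ d k = 1 := by omega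
      rcases hd01 with h | h <;> rw [h] at h5 ⊢ <;> omega
    · refine ⟨D, hDGq, hDle.trans ?_⟩
      rw [← hsum]
      exact le_add_self
end
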